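/- arXiv:0807.1557 — 5 statements merged into one kernel-verified Lean document; each statement's English description precedes it below -/
import Mathlib

section
/- For all positive integers r and m there exists n₀ = n₀(r,m) (and one may take n₀(r,m) = c·6^{rm} for some absolute constant c) such that for every n ≥ n₀ and every r-coloring of D(n), there is a monochromatic binary tree B(m) with m levels in D(n). -/
/-- The line `L(I,C)` in `D(n) = {0,1}ⁿ × {0,1}ⁿ`: all pairs `(x, y)` with
`y i = 1 - x i` for `i ∈ I` and `x j = y j = C j` for `j ∉ I`. -/
def cubeLine (n : ℕ) (I : Finset (Fin n)) (C : Fin n → Bool) :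
    Set ((Fin n → Bool) × (Fin n → Bool)) :=
  {p | (∀ i ∈ I, p.2 i = !p.1 i) ∧ ∀ i ∉ I, p.1 i = C i ∧ p.2 i = C i}

/-- `T`, indexed by binary strings (lists of Booleans, the root being the empty
list, the node with address `s` at level `s.length` having children with addresses
`false :: s` and `true :: s`), is a binary tree `B(m)` with `m` levels in `D(n)`:
each node `(X, Y)` is joined to children of the form `(X', Y)` and `(X, Y')` (with
`X' ≠ X`, `Y' ≠ Y`), and for each `1 ≤ k ≤ m` all `2^k` points at level `k` lie on
a common line.  (For `m = 1` this is exactly a corner.) -/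
def IsBinTree (n m : ℕ) (T : List Bool → (Fin n → Bool) × (Fin n → Bool)) : Prop :=
  (∀ s : List Bool, s.length < m →
      (T (false :: s)).2 = (T s).2 ∧ (T (false :: s)).1 ≠ (T s).1 ∧
      (T (true :: s)).1 = (T s).1 ∧ (T (true :: s)).2 ≠ (T s).2) ∧
  (∀ k : ℕ, 1 ≤ k → k ≤ m → ∃ (I : Finset (Fin n)) (C : Fin n → Bool),
      ∀ s : List Bool, s.length = k → T s ∈ cubeLine n I C)


/-!
A point of `D(n)` is written `(X, flipOn I X)`; it lies on the line `L(I, C)` as soon as `X`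
agrees with `C` off `I`. A binary tree with `m` levels is then given by a base point `X` and a
chain `I 0 ⊂ I 1 ⊂ ⋯ ⊂ I m`: the node `s` at level `k` is `(X_s, flipOn (I k) X_s)`, where `X_s`
arises from `X` by flipping `I (j + 1) \ I j` at every `false` step `j` of `s`.

Such chains come from disjoint nonempty blocks `B 0, B 1, …`: a stage-`j` point is one of the
form `(Y, flipOn I Y)` with `I` the complement of `B 0 ∪ ⋯ ∪ B (j - 1)`. The blocks are built
one at a time by a density increment, keeping a set `D` of base points such that, for `X ∈ D`,
the stage-`j` points over `X` flipped on any union of blocks `B u`, `u ≥ j`, all have one colour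
`c j`. At stage `t`, take the majority colour class `A ⊆ D` of the stage-`t` points;
Cauchy–Schwarz over the fibres of the restriction to the complement of a fresh window `W` gives
a nonempty `K ⊆ W` such that `{a ∈ A | flipOn K a ∈ A}` has density at least
`density(A)² / 2`, and this set and `K` are the next `D` and block. After `r m + 1` stages, by
pigeonhole some `m + 1` stages `σ m < ⋯ < σ 0` share a colour, and `I k`, the complement of the
first `σ k` blocks, gives a monochromatic tree. Windows of sizes `(2 r + 1) 2^t` fit into
`4 · 6^(r m)` coordinates.
-/

namespace BinaryTreeRamsey

open Finset Function

section Finset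

variable {α β : Type*} [DecidableEq β]

lemma biUnion_sdiff_biUnion [DecidableEq α] {B : α → Finset β} (hB : Pairwise (Disjoint on B))
    (U V : Finset α) : U.biUnion B \ V.biUnion B = (U \ V).biUnion B := by
  ext x
  simp only [mem_sdiff, mem_biUnion, not_exists, not_and]
  constructor
  · rintro ⟨⟨u, hu, hx⟩, hV⟩
    exact ⟨u, ⟨hu, fun huV => hV u huV hx⟩, hx⟩
  · rintro ⟨u, ⟨hu, huV⟩, hx⟩
    exact ⟨⟨u, hu, hx⟩, fun v hv hxv =>
      disjoint_left.mp (hB (ne_of_mem_of_not_mem hv huV).symm) hx hxv⟩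

lemma biUnion_symmDiff [DecidableEq α] {B : α → Finset β} (hB : Pairwise (Disjoint on B))
    (U V : Finset α) :
    (symmDiff U V).biUnion B = symmDiff (U.biUnion B) (V.biUnion B) := by
  rw [symmDiff_def, symmDiff_def, sup_eq_union, sup_eq_union, union_biUnion,
    biUnion_sdiff_biUnion hB, biUnion_sdiff_biUnion hB]

lemma biUnion_update_of_notMem {B : ℕ → Finset β} {t : ℕ} {U : Finset ℕ} (h : t ∉ U)
    (K : Finset β) : U.biUnion (update B t K) = U.biUnion B :=
  biUnion_congr rfl fun _ hu => update_of_ne (ne_of_mem_of_not_mem hu h) _ _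

lemma sq_card_le_card_mul_card_filter_eq (s : Finset α) (t : Finset β) (f : α → β)
    (hf : ∀ a ∈ s, f a ∈ t) : #s ^ 2 ≤ #t * #{p ∈ s ×ˢ s | f p.1 = f p.2} := by
  have hfib : #{p ∈ s ×ˢ s | f p.1 = f p.2} = ∑ y ∈ t, #{a ∈ s | f a = y} ^ 2 := by
    rw [card_eq_sum_card_fiberwise (f := fun p => f p.1) (t := t)
      fun p hp => hf _ (mem_product.mp (mem_filter.mp hp).1).1]
    refine sum_congr rfl fun y _ => ?_
    rw [sq, ← card_product]
    congr 1
    ext p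
    simp only [mem_filter, mem_product]
    grind
  calc #s ^ 2 = (∑ y ∈ t, #{a ∈ s | f a = y}) ^ 2 := by rw [card_eq_sum_card_fiberwise hf]
    _ ≤ #t * ∑ y ∈ t, #{a ∈ s | f a = y} ^ 2 := sq_sum_le_card_mul_sum_sq
    _ = _ := by rw [hfib]

lemma exists_card_le_card_mul_card_fiber {κ : Type*} [Fintype κ] [Nonempty κ] [DecidableEq κ]
    (s : Finset α) (f : α → κ) : ∃ γ, #s ≤ Fintype.card κ * #{a ∈ s | f a = γ} := by
  obtain ⟨γ, -, hγ⟩ := exists_max_image univ (fun γ => #{a ∈ s | f a = γ}) univ_nonempty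
  refine ⟨γ, ?_⟩
  calc #s = ∑ γ', #{a ∈ s | f a = γ'} := card_eq_sum_card_fiberwise fun _ _ => mem_univ _
    _ ≤ #(univ : Finset κ) • #{a ∈ s | f a = γ} :=
        sum_le_card_nsmul _ _ _ fun γ' _ => hγ γ' (mem_univ _)
    _ = _ := by rw [card_univ, smul_eq_mul]

end Finset

section Flip

variable {ι : Type*} [DecidableEq ι]

def flipOn (S : Finset ι) (X : ι → Bool) : ι → Bool :=
  fun i => if i ∈ S then !X i else X i

lemma flipOn_apply_of_notMem {S : Finset ι} {i : ι} (h : i ∉ S) (X : ι → Bool) :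
    flipOn S X i = X i :=
  if_neg h

@[simp] lemma flipOn_empty (X : ι → Bool) : flipOn ∅ X = X := by
  funext i
  simp [flipOn]

lemma flipOn_flipOn (S T : Finset ι) (X : ι → Bool) :
    flipOn S (flipOn T X) = flipOn (symmDiff S T) X := by
  funext i
  by_cases hS : i ∈ S <;> by_cases hT : i ∈ T <;> simp [flipOn, mem_symmDiff, hS, hT]

lemma flipOn_left_inj {S T : Finset ι} {X : ι → Bool} : flipOn S X = flipOn T X ↔ S = T := by
  refine ⟨fun h => ?_, fun h => h ▸ rfl⟩
  ext i
  have := congrFun h i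
  by_cases hS : i ∈ S <;> by_cases hT : i ∈ T <;> simp_all [flipOn]

lemma flipOn_ne_self {S : Finset ι} (hS : S.Nonempty) (X : ι → Bool) : flipOn S X ≠ X := by
  conv_rhs => rw [← flipOn_empty X]
  exact flipOn_left_inj.not.mpr hS.ne_empty

def flipPair (I : Finset ι) (X : ι → Bool) : (ι → Bool) × (ι → Bool) :=
  (X, flipOn I X)

variable [Fintype ι]

def disagree (a b : ι → Bool) : Finset ι :=
  {i | a i ≠ b i}

lemma flipOn_disagree (a b : ι → Bool) : flipOn (disagree a b) a = b := by
  funext i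
  by_cases h : a i = b i
  · simp [flipOn, disagree, h]
  · simpa [flipOn, disagree, h] using Bool.eq_not_of_ne h

lemma disagree_flipOn (K : Finset ι) (a : ι → Bool) : disagree a (flipOn K a) = K := by
  ext i
  by_cases h : i ∈ K <;> simp [flipOn, disagree, h]

end Flip

section Density

variable {ι : Type*} [Fintype ι] [DecidableEq ι]

lemma card_filter_disagree_subset (A : Finset (ι → Bool)) (W : Finset ι) :
    #{p ∈ A ×ˢ A | disagree p.1 p.2 ⊆ W} = ∑ K ∈ W.powerset, #{a ∈ A | flipOn K a ∈ A} := by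
  rw [← card_sigma]
  refine card_nbij' (fun p => ⟨disagree p.1 p.2, p.1⟩) (fun q => (q.2, flipOn q.1 q.2))
    ?_ ?_ ?_ ?_
  · intro p hp
    simp only [coe_filter, mem_product, Set.mem_ofPred_eq] at hp
    simpa [flipOn_disagree, hp.1.1, hp.1.2] using hp.2
  · intro q hq
    simp only [coe_sigma, Set.mem_sigma_iff, mem_coe, mem_powerset, coe_filter,
      Set.mem_ofPred_eq] at hq
    simpa [disagree_flipOn, and_comm] using hq
  · intro p _
    simp [flipOn_disagree]
  · intro q _
    simp [disagree_flipOn]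

/-- Cauchy–Schwarz over the fibres of the restriction to `Wᶜ`, of which there are
`2 ^ (card ι - #W)`. -/
lemma two_pow_card_mul_sq_card_le (A : Finset (ι → Bool)) (W : Finset ι) :
    2 ^ #W * #A ^ 2 ≤ 2 ^ Fintype.card ι * #{p ∈ A ×ˢ A | disagree p.1 p.2 ⊆ W} := by
  have hrestrict : ∀ a b : ι → Bool,
      disagree a b ⊆ W ↔ (fun i : ↥Wᶜ => a i) = (fun i : ↥Wᶜ => b i) := by
    intro a b
    simp only [disagree, subset_iff, mem_filter, mem_univ, true_and, funext_iff, Subtype.forall,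
      mem_compl, not_imp_comm (a := _ ∈ W)]
  have hCS := sq_card_le_card_mul_card_filter_eq A univ (fun (a : ι → Bool) (i : ↥Wᶜ) => a i)
    fun _ _ => mem_univ _
  simp only [← hrestrict, card_univ, Fintype.card_fun, Fintype.card_bool, Fintype.card_coe,
    card_compl] at hCS
  calc 2 ^ #W * #A ^ 2
      ≤ 2 ^ #W * (2 ^ (Fintype.card ι - #W) * #{p ∈ A ×ˢ A | disagree p.1 p.2 ⊆ W}) :=
        Nat.mul_le_mul_left _ hCS
    _ = _ := by rw [← mul_assoc, ← pow_add, Nat.add_sub_cancel' (card_le_univ W)]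

lemma exists_dense_flip {A : Finset (ι → Bool)} {W : Finset ι}
    (hA : 2 * 2 ^ Fintype.card ι ≤ 2 ^ #W * #A) :
    ∃ K ⊆ W, K.Nonempty ∧ #A ^ 2 ≤ 2 ^ (Fintype.card ι + 1) * #{a ∈ A | flipOn K a ∈ A} := by
  set N := Fintype.card ι
  set t : Finset ι → ℕ := fun K => #{a ∈ A | flipOn K a ∈ A}
  have hW : W.Nonempty := by
    rw [nonempty_iff_ne_empty]
    rintro rfl
    have : #A ≤ 2 ^ N := by simpa using card_le_univ A
    simp only [card_empty, pow_zero, one_mul] at hA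
    have : 0 < 2 ^ N := by positivity
    omega
  obtain ⟨i, hi⟩ := hW
  obtain ⟨K, hK, hmax⟩ := exists_max_image (W.powerset.erase ∅) t ⟨{i}, by simp [hi]⟩
  simp only [mem_erase, mem_powerset] at hK
  refine ⟨K, hK.2, nonempty_iff_ne_empty.mpr hK.1, ?_⟩
  have hsum : ∑ L ∈ W.powerset, t L ≤ #A + 2 ^ #W * t K := by
    have ht_empty : t ∅ = #A := by simp [t]
    rw [← add_sum_erase _ _ (empty_mem_powerset W), ht_empty, ← card_powerset W]
    gcongr
    calc ∑ L ∈ W.powerset.erase ∅, t L ≤ #(W.powerset.erase ∅) • t K :=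
          sum_le_card_nsmul _ _ _ hmax
      _ ≤ #W.powerset * t K := by rw [smul_eq_mul]; gcongr; exact erase_subset _ _
  have hpairs : 2 ^ #W * #A ^ 2 ≤ 2 ^ N * ∑ L ∈ W.powerset, t L := by
    rw [← card_filter_disagree_subset]
    exact two_pow_card_mul_sq_card_le A W
  have key : 2 ^ #W * #A ^ 2 ≤ 2 ^ #W * (2 ^ (N + 1) * t K) := by
    have h1 := hpairs.trans (Nat.mul_le_mul_left (2 ^ N) hsum)
    have h2 := Nat.mul_le_mul_right #A hA
    rw [pow_succ 2 N]
    nlinarith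
  exact Nat.le_of_mul_le_mul_left key (by positivity)

end Density

section Stage

variable {ι κ : Type*} [Fintype ι] [DecidableEq ι]

def stagePoint (B : ℕ → Finset ι) (j : ℕ) (X : ι → Bool) : (ι → Bool) × (ι → Bool) :=
  flipPair ((range j).biUnion B)ᶜ X

def IsColorCube (χ : (ι → Bool) × (ι → Bool) → κ) (t : ℕ) (B : ℕ → Finset ι) (c : ℕ → κ)
    (D : Finset (ι → Bool)) : Prop :=
  ∀ X ∈ D, ∀ j < t, ∀ U ⊆ Ico j t, χ (stagePoint B j (flipOn (U.biUnion B) X)) = c j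

def colorClass [DecidableEq κ] (χ : (ι → Bool) × (ι → Bool) → κ) (B : ℕ → Finset ι) (t : ℕ)
    (D : Finset (ι → Bool)) (γ : κ) : Finset (ι → Bool) :=
  {X ∈ D | χ (stagePoint B t X) = γ}

lemma IsColorCube.succ [DecidableEq κ] {χ : (ι → Bool) × (ι → Bool) → κ} {t : ℕ}
    {B : ℕ → Finset ι} {c : ℕ → κ} {D : Finset (ι → Bool)} {K : Finset ι}
    (h : IsColorCube χ t B c D) (hK : ∀ u < t, Disjoint (B u) K) (γ : κ) :
    IsColorCube χ (t + 1) (update B t K) (update c t γ)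
      {X ∈ colorClass χ B t D γ | flipOn K X ∈ colorClass χ B t D γ} := by
  intro X hX j hj U hU
  simp only [colorClass, mem_filter] at hX
  have hUt : U.erase t ⊆ Ico j t := fun u hu => by
    have := hU (mem_of_mem_erase hu)
    simp only [mem_Ico] at this ⊢
    exact ⟨this.1, lt_of_le_of_ne (Nat.lt_succ_iff.mp this.2) (ne_of_mem_erase hu)⟩
  obtain ⟨L, hL, hflip⟩ : ∃ L, (flipOn L X ∈ D ∧ χ (stagePoint B t (flipOn L X)) = γ) ∧
      flipOn (U.biUnion (update B t K)) X = flipOn ((U.erase t).biUnion B) (flipOn L X) := by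
    by_cases htU : t ∈ U
    · refine ⟨K, hX.2, ?_⟩
      have hdisj : Disjoint ((U.erase t).biUnion (update B t K)) K := by
        rw [biUnion_update_of_notMem (notMem_erase t U), disjoint_biUnion_left]
        exact fun u hu => hK u (mem_Ico.mp (hUt hu)).2
      rw [flipOn_flipOn, ← biUnion_update_of_notMem (notMem_erase t U) K]
      conv_lhs => rw [← insert_erase htU]
      rw [biUnion_insert, update_self, hdisj.symmDiff_eq_sup, sup_eq_union, union_comm]
    · exact ⟨∅, by simpa using hX.1,
        by simp [erase_eq_of_notMem htU, biUnion_update_of_notMem htU]⟩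
  have hstage : stagePoint (update B t K) j = stagePoint B j := by
    unfold stagePoint
    rw [biUnion_update_of_notMem (by simpa using Nat.lt_succ_iff.mp hj)]
  rw [hflip, hstage]
  rcases (Nat.lt_succ_iff.mp hj).lt_or_eq with hjt | rfl
  · rw [update_of_ne hjt.ne]
    exact h _ hL.1 j hjt _ hUt
  · have hU0 : U.erase j = ∅ := by simpa using hUt
    rw [update_self, hU0, biUnion_empty, flipOn_empty]
    exact hL.2

/-- After `t` stages the base points have density at least `1 / densityLoss r t`: a stage squares
the density and loses a factor `r` to the majority colour and a factor `2` to
`exists_dense_flip`. -/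
def densityLoss (r t : ℕ) : ℕ :=
  (2 * r ^ 2) ^ (2 ^ t - 1)

lemma densityLoss_succ (r t : ℕ) : densityLoss r (t + 1) = 2 * r ^ 2 * densityLoss r t ^ 2 := by
  have : 2 ^ (t + 1) - 1 = 1 + (2 ^ t - 1) * 2 := by
    have := Nat.one_le_two_pow (n := t)
    rw [pow_succ]
    omega
  rw [densityLoss, densityLoss, this, pow_add, pow_one, pow_mul]

lemma exists_colorCube_succ [Fintype κ] [DecidableEq κ] {χ : (ι → Bool) × (ι → Bool) → κ}
    {W : Finset ι} {t : ℕ} {B : ℕ → Finset ι} {c : ℕ → κ} {D : Finset (ι → Bool)}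
    (hB : ∀ u < t, Disjoint (B u) W)
    (hW : 2 * Fintype.card κ * densityLoss (Fintype.card κ) t ≤ 2 ^ #W)
    (hD : 2 ^ Fintype.card ι ≤ #D * densityLoss (Fintype.card κ) t)
    (h : IsColorCube χ t B c D) :
    ∃ K ⊆ W, K.Nonempty ∧ ∃ (c' : ℕ → κ) (D' : Finset (ι → Bool)),
      2 ^ Fintype.card ι ≤ #D' * densityLoss (Fintype.card κ) (t + 1) ∧
      IsColorCube χ (t + 1) (update B t K) c' D' := by
  have : Nonempty κ := ⟨χ default⟩
  obtain ⟨γ, hγ⟩ := exists_card_le_card_mul_card_fiber D fun X => χ (stagePoint B t X)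
  set r := Fintype.card κ
  set E := densityLoss r t
  set N := Fintype.card ι
  set A := colorClass χ B t D γ
  have hDA : 2 ^ N ≤ r * #A * E := hD.trans (Nat.mul_le_mul_right E hγ)
  have hA : 2 * 2 ^ N ≤ 2 ^ #W * #A :=
    calc 2 * 2 ^ N ≤ 2 * (r * #A * E) := by gcongr
      _ = 2 * r * E * #A := by ring
      _ ≤ 2 ^ #W * #A := Nat.mul_le_mul_right _ hW
  obtain ⟨K, hKW, hK, hAK⟩ := exists_dense_flip hA
  refine ⟨K, hKW, hK, update c t γ, _, ?_, h.succ (fun u hu => (hB u hu).mono_right hKW) γ⟩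
  have hsq : 2 ^ N * 2 ^ N ≤ 2 ^ N * (#{a ∈ A | flipOn K a ∈ A} * (2 * r ^ 2 * E ^ 2)) :=
    calc 2 ^ N * 2 ^ N ≤ (r * #A * E) * (r * #A * E) := Nat.mul_le_mul hDA hDA
      _ = r ^ 2 * E ^ 2 * #A ^ 2 := by ring
      _ ≤ r ^ 2 * E ^ 2 * (2 ^ (N + 1) * #{a ∈ A | flipOn K a ∈ A}) := by gcongr
      _ = _ := by ring
  rw [densityLoss_succ]
  exact Nat.le_of_mul_le_mul_left hsq (by positivity)

lemma exists_colorCube [Fintype κ] [DecidableEq κ] (χ : (ι → Bool) × (ι → Bool) → κ)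
    {W : ℕ → Finset ι} (hW : Pairwise (Disjoint on W)) {T : ℕ}
    (hWT : ∀ t < T, 2 * Fintype.card κ * densityLoss (Fintype.card κ) t ≤ 2 ^ #(W t)) :
    ∃ (B : ℕ → Finset ι) (c : ℕ → κ) (D : Finset (ι → Bool)),
      (∀ u, B u ⊆ W u) ∧ (∀ u < T, (B u).Nonempty) ∧ D.Nonempty ∧ IsColorCube χ T B c D := by
  suffices ∀ t ≤ T, ∃ (B : ℕ → Finset ι) (c : ℕ → κ) (D : Finset (ι → Bool)),
      (∀ u, B u ⊆ W u) ∧ (∀ u < t, (B u).Nonempty) ∧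
      2 ^ Fintype.card ι ≤ #D * densityLoss (Fintype.card κ) t ∧ IsColorCube χ t B c D by
    obtain ⟨B, c, D, hBW, hB, hD, h⟩ := this T le_rfl
    refine ⟨B, c, D, hBW, hB, card_pos.mp (Nat.pos_of_ne_zero fun h0 => ?_), h⟩
    rw [h0, zero_mul] at hD
    exact (Nat.two_pow_pos _).ne' (Nat.le_zero.mp hD)
  intro t ht
  induction t with
  | zero =>
    exact ⟨fun _ => ∅, fun _ => χ default, univ, by simp, by simp, by simp [densityLoss],
      fun _ _ j hj => absurd hj (Nat.not_lt_zero j)⟩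
  | succ t ih =>
    obtain ⟨B, c, D, hBW, hB, hD, h⟩ := ih (by omega)
    obtain ⟨K, hKW, hK, c', D', hD', h'⟩ :=
      exists_colorCube_succ (fun u hu => (hW hu.ne).mono_left (hBW u)) (hWT t ht) hD h
    refine ⟨update B t K, c', D', fun u => ?_, fun u hu => ?_, hD', h'⟩
    · rcases eq_or_ne u t with rfl | hut
      · simpa using hKW
      · simpa [update_of_ne hut] using hBW u
    · rcases eq_or_ne u t with rfl | hut
      · simpa using hK
      · simpa [update_of_ne hut] using hB u (by omega)

end Stage

section Tree

def treeBase {ι : Type*} [DecidableEq ι] (I : ℕ → Finset ι) (X : ι → Bool) :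
    List Bool → ι → Bool
  | [] => X
  | true :: s => treeBase I X s
  | false :: s => flipOn (I (s.length + 1) \ I s.length) (treeBase I X s)

lemma treeBase_apply_of_notMem {ι : Type*} [DecidableEq ι] {I : ℕ → Finset ι} (hI : Monotone I)
    (X : ι → Bool) : ∀ (s : List Bool) {i : ι}, i ∉ I s.length → treeBase I X s i = X i
  | [], _, _ => rfl
  | true :: s, _, hi => treeBase_apply_of_notMem hI X s fun h => hi (hI (Nat.le_succ _) h)
  | false :: s, _, hi => by
    rw [treeBase, flipOn_apply_of_notMem (S := I (s.length + 1) \ I s.length)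
      fun h => hi (mem_sdiff.mp h).1]
    exact treeBase_apply_of_notMem hI X s fun h => hi (hI (Nat.le_succ _) h)

variable {n : ℕ}

lemma flipPair_mem_cubeLine {I : Finset (Fin n)} {X C : Fin n → Bool}
    (h : ∀ i ∉ I, X i = C i) : flipPair I X ∈ cubeLine n I C :=
  ⟨fun _ hi => if_pos hi, fun i hi => ⟨h i hi, (flipOn_apply_of_notMem hi X).trans (h i hi)⟩⟩

lemma isBinTree_treeBase {I : ℕ → Finset (Fin n)} (hI : Monotone I) {m : ℕ}
    (hIm : ∀ k < m, I k ≠ I (k + 1)) (X : Fin n → Bool) :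
    IsBinTree n m fun s => flipPair (I s.length) (treeBase I X s) := by
  refine ⟨fun s hs => ?_, fun k _ _ => ⟨I k, X, fun s hs => by
    subst hs
    exact flipPair_mem_cubeLine fun _ => treeBase_apply_of_notMem hI X s⟩⟩
  have hsub : I s.length ⊆ I (s.length + 1) := hI (Nat.le_succ _)
  have hJ : (I (s.length + 1) \ I s.length).Nonempty :=
    sdiff_nonempty.mpr fun h => hIm _ hs (subset_antisymm hsub h)
  refine ⟨?_, flipOn_ne_self hJ _, rfl, fun h => hIm _ hs (flipOn_left_inj.mp h).symm⟩
  simp only [flipPair, treeBase, List.length_cons, flipOn_flipOn]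
  rw [symmDiff_comm, symmDiff_of_le sdiff_le, sdiff_sdiff_right_self, inf_eq_right.mpr hsub]

variable {B : ℕ → Finset (Fin n)} {σ : ℕ → ℕ}

lemma compl_biUnion_range_sdiff (hB : Pairwise (Disjoint on B)) (a b : ℕ) :
    ((range b).biUnion B)ᶜ \ ((range a).biUnion B)ᶜ = (range a \ range b).biUnion B := by
  rw [compl_sdiff_compl, biUnion_sdiff_biUnion hB]

lemma exists_treeBase_eq_flipOn_biUnion (hB : Pairwise (Disjoint on B)) (hσ : Antitone σ)
    {T : ℕ} (hσT : σ 0 < T) (X : Fin n → Bool) (s : List Bool) :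
    ∃ U ⊆ Ico (σ s.length) T,
      treeBase (fun k => ((range (σ k)).biUnion B)ᶜ) X s = flipOn (U.biUnion B) X := by
  induction s with
  | nil => exact ⟨∅, empty_subset _, by simp [treeBase]⟩
  | cons b s ih =>
    obtain ⟨U, hU, hUX⟩ := ih
    have hσs : σ (s.length + 1) ≤ σ s.length := hσ (Nat.le_succ _)
    cases b
    · refine ⟨symmDiff (range (σ s.length) \ range (σ (s.length + 1))) U, ?_, ?_⟩
      · have hσT' : σ s.length < T := (hσ (Nat.zero_le _)).trans_lt hσT
        refine symmDiff_le_sup.trans (union_subset (fun u hu => ?_) (hU.trans ?_))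
        · simp only [mem_sdiff, mem_range, not_lt] at hu
          exact mem_Ico.mpr ⟨hu.2, by omega⟩
        · exact Ico_subset_Ico hσs le_rfl
      · rw [treeBase, hUX, compl_biUnion_range_sdiff hB, flipOn_flipOn, biUnion_symmDiff hB]
    · exact ⟨U, hU.trans (Ico_subset_Ico hσs le_rfl), hUX⟩

lemma exists_monochromatic_isBinTree {κ : Type*} {χ : (Fin n → Bool) × (Fin n → Bool) → κ}
    {T : ℕ} {c : ℕ → κ} {D : Finset (Fin n → Bool)} (hB : Pairwise (Disjoint on B))
    (hBne : ∀ u < T, (B u).Nonempty) (h : IsColorCube χ T B c D) {X : Fin n → Bool}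
    (hX : X ∈ D) {m : ℕ} (hσ : Antitone σ) (hσm : ∀ k < m, σ (k + 1) < σ k) (hσT : σ 0 < T)
    {γ : κ} (hc : ∀ k, c (σ k) = γ) :
    ∃ Tr, IsBinTree n m Tr ∧ ∀ s, χ (Tr s) = γ := by
  set I : ℕ → Finset (Fin n) := fun k => ((range (σ k)).biUnion B)ᶜ
  have hI : Monotone I := fun k k' hkk' =>
    compl_subset_compl.mpr (biUnion_subset_biUnion_of_subset_left _ (range_mono (hσ hkk')))
  have hIm : ∀ k < m, I k ≠ I (k + 1) := fun k hk hIk => by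
    have hσk : σ (k + 1) ∈ range (σ k) \ range (σ (k + 1)) := by simp [hσm k hk]
    obtain ⟨i, hi⟩ := hBne _ ((hσ (Nat.zero_le _)).trans_lt hσT)
    have := subset_biUnion_of_mem B hσk hi
    rw [← compl_biUnion_range_sdiff hB] at this
    change i ∈ I (k + 1) \ I k at this
    rw [← hIk, sdiff_self] at this
    exact notMem_empty i this
  refine ⟨fun s => flipPair (I s.length) (treeBase I X s), isBinTree_treeBase hI hIm X,
    fun s => ?_⟩
  obtain ⟨U, hU, hUX⟩ := exists_treeBase_eq_flipOn_biUnion hB hσ hσT X s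
  rw [← hc s.length, ← h X hX _ ((hσ (Nat.zero_le _)).trans_lt hσT) U hU, ← hUX]
  rfl

end Tree

lemma exists_antitone_monochromatic {κ : Type*} [Fintype κ] [DecidableEq κ] (c : ℕ → κ)
    {m T : ℕ} (hT : Fintype.card κ * m < T) :
    ∃ (γ : κ) (σ : ℕ → ℕ), Antitone σ ∧ (∀ k < m, σ (k + 1) < σ k) ∧ σ 0 < T ∧
      ∀ k, c (σ k) = γ := by
  obtain ⟨γ, -, hγ⟩ := exists_lt_card_fiber_of_mul_lt_card_of_maps_to (s := range T)
    (t := univ) (f := c) (fun _ _ => mem_univ _) (by simpa using hT)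
  obtain ⟨S, hS, hScard⟩ := exists_subset_card_eq (Nat.succ_le_of_lt hγ)
  have hρ := fun i => mem_filter.mp (hS (S.orderEmbOfFin_mem hScard i))
  -- The root of the tree sits at the latest of the chosen stages.
  let σ : ℕ → ℕ := fun k => S.orderEmbOfFin hScard ⟨m - k, by omega⟩
  refine ⟨γ, σ, fun k k' hk => ?_, fun k hk => ?_, mem_range.mp (hρ _).1, fun k => (hρ _).2⟩
  · exact (S.orderEmbOfFin hScard).monotone (Fin.mk_le_mk.mpr (by omega))
  · exact (S.orderEmbOfFin hScard).strictMono (Fin.mk_lt_mk.mpr (by omega))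

def window (n s t : ℕ) : Finset (Fin n) :=
  {i | s * 2 ^ t ≤ i ∧ (i : ℕ) < s * 2 ^ (t + 1)}

lemma pairwise_disjoint_window (n s : ℕ) : Pairwise (Disjoint on window n s) := by
  intro t t' htt'
  wlog hlt : t < t' generalizing t t'
  · exact (this htt'.symm (lt_of_le_of_ne (not_lt.mp hlt) htt'.symm)).symm
  have : s * 2 ^ (t + 1) ≤ s * 2 ^ t' := Nat.mul_le_mul_left _ (Nat.pow_le_pow_right two_pos hlt)
  refine disjoint_left.mpr fun i hi hi' => ?_
  simp only [window, mem_filter, mem_univ, true_and] at hi hi'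
  omega

lemma card_window {n s t : ℕ} (h : s * 2 ^ (t + 1) ≤ n) : #(window n s t) = s * 2 ^ t := by
  have hmap : (window n s t).map Fin.valEmbedding = Ico (s * 2 ^ t) (s * 2 ^ (t + 1)) := by
    ext x
    simp only [window, mem_map, mem_filter, mem_univ, true_and, Fin.valEmbedding_apply, mem_Ico]
    exact ⟨fun ⟨i, hi, hix⟩ => hix ▸ hi, fun hx => ⟨⟨x, by omega⟩, hx, rfl⟩⟩
  have : s * 2 ^ (t + 1) = 2 * (s * 2 ^ t) := by ring
  rw [← card_map, hmap, Nat.card_Ico]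
  omega

lemma two_mul_densityLoss_le {r s : ℕ} (hs : 2 * r ^ 2 ≤ 2 ^ s) (t : ℕ) :
    2 * r * densityLoss r t ≤ 2 ^ (s * 2 ^ t) :=
  calc 2 * r * densityLoss r t ≤ 2 * r ^ 2 * densityLoss r t := by
        gcongr
        exact Nat.le_self_pow two_ne_zero r
    _ = (2 * r ^ 2) ^ 2 ^ t := by
        rw [densityLoss, ← pow_succ', Nat.sub_add_cancel Nat.one_le_two_pow]
    _ ≤ (2 ^ s) ^ 2 ^ t := Nat.pow_le_pow_left hs _
    _ = 2 ^ (s * 2 ^ t) := (pow_mul _ _ _).symm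

lemma two_mul_sq_le_two_pow (r : ℕ) : 2 * r ^ 2 ≤ 2 ^ (2 * r + 1) :=
  calc 2 * r ^ 2 ≤ 2 * (2 ^ r) ^ 2 := by gcongr; exact Nat.lt_two_pow_self.le
    _ = 2 ^ (2 * r + 1) := by ring

lemma two_mul_add_one_mul_two_pow_le {r m n t : ℕ} (hm : 0 < m) (hn : 4 * 6 ^ (r * m) ≤ n)
    (ht : t ≤ r * m) : (2 * r + 1) * 2 ^ (t + 1) ≤ n := by
  have h3 : r + 1 ≤ 3 ^ (r * m) :=
    (Nat.lt_pow_self (by norm_num)).trans_le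
      (Nat.pow_le_pow_right (by norm_num) (Nat.le_mul_of_pos_right r hm))
  calc (2 * r + 1) * 2 ^ (t + 1) ≤ (2 * 3 ^ (r * m)) * 2 ^ (r * m + 1) :=
        Nat.mul_le_mul (by omega) (Nat.pow_le_pow_right two_pos (by omega))
    _ = 4 * 6 ^ (r * m) := by rw [show (6 : ℕ) = 2 * 3 by norm_num, mul_pow]; ring
    _ ≤ n := hn

end BinaryTreeRamsey

open BinaryTreeRamsey Finset

/-- For all positive `r` and `m` there is `n₀ = n₀(r, m)` (one may take
`n₀ = c * 6 ^ (r * m)` for an absolute constant `c`) such that for every `n ≥ n₀`,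
every `r`-coloring of `D(n)` contains a monochromatic binary tree with `m` levels. -/
theorem monochromatic_binary_tree :
    ∃ c : ℕ, 0 < c ∧ ∀ r m : ℕ, 0 < r → 0 < m → ∀ n : ℕ, c * 6 ^ (r * m) ≤ n →
      ∀ χ : (Fin n → Bool) × (Fin n → Bool) → Fin r,
        ∃ T : List Bool → (Fin n → Bool) × (Fin n → Bool),
          IsBinTree n m T ∧
          ∀ s : List Bool, s.length ≤ m → χ (T s) = χ (T []) := by
  refine ⟨4, by norm_num, fun r m _ hm n hn χ => ?_⟩
  have hW : ∀ t < r * m + 1, 2 * Fintype.card (Fin r) * densityLoss (Fintype.card (Fin r)) t ≤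
      2 ^ #(window n (2 * r + 1) t) := fun t ht => by
    rw [Fintype.card_fin, card_window (two_mul_add_one_mul_two_pow_le hm hn (by omega))]
    exact two_mul_densityLoss_le (two_mul_sq_le_two_pow r) t
  obtain ⟨B, c, D, hBW, hB, ⟨X, hX⟩, hcube⟩ :=
    exists_colorCube χ (pairwise_disjoint_window n (2 * r + 1)) hW
  obtain ⟨γ, σ, hσ, hσm, hσT, hσc⟩ :=
    exists_antitone_monochromatic c (by simp : Fintype.card (Fin r) * m < r * m + 1)
  obtain ⟨T, hT, hTγ⟩ := exists_monochromatic_isBinTree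
    (fun u v huv => (pairwise_disjoint_window n _ huv).mono (hBW u) (hBW v))
    hB hcube hX hσ hσm hσT hσc
  exact ⟨T, hT, fun s _ => (hTγ s).trans (hTγ []).symm⟩
end

section
/- There is an absolute constant c such that for every r and every n > c·6^r, any r-coloring of the diagonals of the n-cube (i.e., of the unordered pairs of distinct vertices of {0,1}^n) contains a monochromatic self-crossing path: three diagonals {x,y}, {y,z}, {z,w} of the same color such that {x,y} and {z,w} are both main diagonals of the same affine subcube of Q^n. -/
/-!
Density increment. A stage consists of a set `S` of free coordinates, a set `A` of vertices and
a set `C` of colours such that no edge `{x, z}` of `A` whose difference set is a nonempty proper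
subset of `S` has a colour in `C`. Cauchy–Schwarz over the fibres of the projection forgetting
`S`, together with the fact that few `T ⊆ S` have `|T| ≤ 2|S|/5`, gives a proper `T ⊂ S` with
`|T| > 2|S|/5` such that `x` and `flipOn T x` both lie in `A` for many `x`. The majority colour
`a` of these edges is not in `C`, and on its colour class `A'` the colour `a` is also forbidden on
proper subcubes of `T`: an edge `{x, z}` of colour `a` would close the self-crossing path
`flipOn T x, x, z, flipOn T z`. Each round adds a colour, shrinks `|S|` by a factor `5/2` and
squares the density of `A` up to a factor `2r`; `n > 350 · 6 ^ r` sustains `r + 1` rounds, more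
than there are colours.
-/

/-- `{x, y}` and `{z, w}` are both main diagonals of one and the same affine
subcube of the `n`-cube: for some set `I` of free coordinates, `y i = 1 - x i` and
`w i = 1 - z i` for `i ∈ I`, while outside `I` all four points agree. -/
def MainDiagonalsSameSubcube (n : ℕ) (x y z w : Fin n → Bool) : Prop :=
  ∃ I : Finset (Fin n),
    (∀ i ∈ I, y i = !x i ∧ w i = !z i) ∧
    (∀ i ∉ I, x i = y i ∧ z i = w i ∧ x i = z i)

open Finset

namespace Finset

lemma sq_card_le_card_mul_sum_card_fiber {α β : Type*} [DecidableEq β] {s : Finset α}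
    {t : Finset β} {g : α → β} (hg : ∀ x ∈ s, g x ∈ t) :
    #s ^ 2 ≤ #t * ∑ x ∈ s, #{z ∈ s | g z = g x} := by
  have hsum : ∑ x ∈ s, #{z ∈ s | g z = g x} = ∑ b ∈ t, #{z ∈ s | g z = b} ^ 2 := by
    rw [← sum_fiberwise_of_maps_to hg]
    refine sum_congr rfl fun b _ => ?_
    rw [sum_congr rfl fun x hx => by rw [(mem_filter.mp hx).2], sum_const, smul_eq_mul, sq]
  rw [hsum, card_eq_sum_card_fiberwise hg]
  exact sq_sum_le_card_mul_sum_sq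

lemma exists_mem_image_card_le_mul_card_fiber {α κ : Type*} [Fintype κ] [DecidableEq κ]
    {s : Finset α} (hs : s.Nonempty) (c : α → κ) :
    ∃ a ∈ s.image c, #s ≤ Fintype.card κ * #{x ∈ s | c x = a} := by
  obtain ⟨a, ha, hmax⟩ := (s.image c).exists_max_image (fun b => #{x ∈ s | c x = b})
    (hs.image c)
  refine ⟨a, ha, ?_⟩
  calc #s ≤ #{x ∈ s | c x = a} * #(s.image c) := card_le_mul_card_image s _ hmax
    _ ≤ Fintype.card κ * #{x ∈ s | c x = a} := by
      rw [mul_comm]; exact Nat.mul_le_mul_right _ (card_le_univ _)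

lemma card_filter_card_le_mul_pow_le {α : Type*} (S : Finset α) (t : ℕ) :
    #{T ∈ S.powerset | #T ≤ t} * 2 ^ (#S - t) ≤ 3 ^ #S := by
  calc #{T ∈ S.powerset | #T ≤ t} * 2 ^ (#S - t)
      = ∑ T ∈ S.powerset with #T ≤ t, 2 ^ (#S - t) := by rw [sum_const, smul_eq_mul]
    _ ≤ ∑ T ∈ S.powerset with #T ≤ t, 2 ^ (#S - #T) :=
      sum_le_sum fun T hT => Nat.pow_le_pow_right two_pos (by simp at hT; omega)
    _ ≤ ∑ T ∈ S.powerset, 2 ^ (#S - #T) := sum_le_sum_of_subset (filter_subset _ _)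
    _ = 3 ^ #S := by simpa using sum_pow_mul_eq_add_pow (1 : ℕ) 2 S

lemma exists_mem_filter_sq_le_mul_card {ι : Type*} {P : Finset ι} {p : ι → Prop}
    [DecidablePred p] {f : ι → ℕ} {M N : ℕ} (hM : 0 < M) (hf : ∀ i ∈ P, f i ≤ M)
    (hsum : M ^ 2 ≤ N * ∑ i ∈ P, f i) (hbad : 2 * N * #{i ∈ P | ¬ p i} ≤ M) :
    ∃ i ∈ P, p i ∧ M ^ 2 ≤ 2 * N * #P * f i := by
  have hbad_sum : ∑ i ∈ P with ¬ p i, f i ≤ #{i ∈ P | ¬ p i} * M := by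
    simpa using sum_le_card_nsmul _ f M fun i hi => hf i (mem_filter.mp hi).1
  have hgood : M ^ 2 ≤ 2 * N * ∑ i ∈ P with p i, f i := by
    rw [← sum_filter_add_sum_filter_not P p] at hsum
    nlinarith
  have hne : {i ∈ P | p i}.Nonempty := by
    by_contra h
    rw [not_nonempty_iff_eq_empty.mp h, sum_empty] at hgood
    simp at hgood; omega
  obtain ⟨i, hi, hmax⟩ := exists_max_image _ f hne
  obtain ⟨hiP, hpi⟩ := mem_filter.mp hi
  refine ⟨i, hiP, hpi, hgood.trans ?_⟩
  calc 2 * N * ∑ j ∈ P with p j, f j ≤ 2 * N * (#{j ∈ P | p j} * f i) := by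
        gcongr; simpa using sum_le_card_nsmul _ f (f i) hmax
    _ ≤ 2 * N * (#P * f i) := Nat.mul_le_mul_left _ (Nat.mul_le_mul_right _ (card_filter_le P p))
    _ = 2 * N * #P * f i := by ring

end Finset

namespace Hypercube

variable {n : ℕ}

def flipOn (T : Finset (Fin n)) (x : Fin n → Bool) : Fin n → Bool :=
  fun i => if i ∈ T then !x i else x i

def diffSet (x z : Fin n → Bool) : Finset (Fin n) := {i | x i ≠ z i}

@[simp] lemma mem_diffSet {x z : Fin n → Bool} {i : Fin n} :
    i ∈ diffSet x z ↔ x i ≠ z i := by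
  simp [diffSet]

lemma diffSet_comm (x z : Fin n → Bool) : diffSet x z = diffSet z x := by
  ext i; simp [eq_comm]

lemma diffSet_flipOn (T : Finset (Fin n)) (x : Fin n → Bool) : diffSet x (flipOn T x) = T := by
  ext i; by_cases hi : i ∈ T <;> simp [flipOn, hi]

lemma flipOn_diffSet (x z : Fin n → Bool) : flipOn (diffSet x z) x = z := by
  funext i; cases hx : x i <;> cases hz : z i <;> simp [flipOn, hx, hz]

lemma diffSet_nonempty_iff {x z : Fin n → Bool} : (diffSet x z).Nonempty ↔ x ≠ z := by
  simp [Finset.Nonempty, funext_iff]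

lemma diffSet_subset_iff {x z : Fin n → Bool} {S : Finset (Fin n)} :
    diffSet x z ⊆ S ↔ ∀ i ∉ S, x i = z i := by
  simp only [subset_iff, mem_diffSet]; grind

lemma mainDiagonalsSameSubcube_flipOn {x z : Fin n → Bool} {T : Finset (Fin n)}
    (h : diffSet x z ⊆ T) : MainDiagonalsSameSubcube n (flipOn T x) x z (flipOn T z) := by
  refine ⟨T, fun i hi => by simp [flipOn, hi], fun i hi => ?_⟩
  simp [flipOn, hi, diffSet_subset_iff.mp h i hi]

lemma sum_card_flipOn_mem_eq (A : Finset (Fin n → Bool)) (S : Finset (Fin n)) :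
    ∑ T ∈ S.powerset, #{x ∈ A | flipOn T x ∈ A} =
      ∑ x ∈ A, #{z ∈ A | diffSet x z ⊆ S} := by
  refine (sum_card_bipartiteAbove_eq_sum_card_bipartiteBelow _).trans
    (sum_congr rfl fun x _ => ?_)
  refine card_nbij' (flipOn · x) (diffSet x) (fun T hT => ?_) (fun z hz => ?_)
    (fun T _ => diffSet_flipOn T x) (fun z _ => flipOn_diffSet x z)
  · simp_all [diffSet_flipOn]
  · simp_all [flipOn_diffSet]

lemma sq_card_le_sum_card_flipOn_mem (A : Finset (Fin n → Bool)) (S : Finset (Fin n)) :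
    #A ^ 2 ≤ 2 ^ (n - #S) * ∑ T ∈ S.powerset, #{x ∈ A | flipOn T x ∈ A} := by
  set proj : (Fin n → Bool) → Finset (Fin n) := fun x => {i ∈ Sᶜ | x i}
  have hproj : ∀ x z, proj z = proj x ↔ diffSet x z ⊆ S := by
    intro x z
    simp only [proj, diffSet_subset_iff, Finset.ext_iff, mem_filter, mem_compl]
    grind
  have hmaps : ∀ x ∈ A, proj x ∈ Sᶜ.powerset := fun x _ => by simp [proj]
  have := sq_card_le_card_mul_sum_card_fiber hmaps
  simp_rw [hproj, card_powerset, card_compl, Fintype.card_fin] at this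
  rwa [sum_card_flipOn_mem_eq]

lemma five_pow_mul_add_five_le (r : ℕ) : 5 ^ r * (r + 5) ≤ 5 * 6 ^ r := by
  induction r with
  | zero => norm_num
  | succ r ih =>
    have : 5 ^ r ≤ 6 ^ r := Nat.pow_le_pow_left (by norm_num) r
    rw [pow_succ, pow_succ]
    nlinarith

lemma pow_243_mul_two_pow_le {m s : ℕ} (h : 14 * m ≤ s) : 243 ^ s * 2 ^ m ≤ 256 ^ s := by
  obtain ⟨j, rfl⟩ := Nat.exists_eq_add_of_le h
  calc 243 ^ (14 * m + j) * 2 ^ m = (243 ^ 14 * 2) ^ m * 243 ^ j := by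
        rw [pow_add, pow_mul, mul_pow]; ring
    _ ≤ (256 ^ 14) ^ m * 256 ^ j := by gcongr <;> norm_num
    _ = 256 ^ (14 * m + j) := by rw [pow_add, pow_mul]

lemma four_mul_three_pow_mul_le {r k n s : ℕ} (hk : k ≤ r) (hn : 350 * 6 ^ r < n)
    (hs : 2 ^ k * n ≤ 5 ^ k * s) :
    4 * 3 ^ s * (2 * r) ^ 2 ^ k ≤ 2 ^ s * 2 ^ (s - 2 * s / 5) := by
  have hm : 14 * (10 + 5 * ((r + 1) * 2 ^ k)) ≤ s := by
    have h5 : 5 ^ k * (r + 5) ≤ 5 * 6 ^ r :=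
      (Nat.mul_le_mul_right _ (Nat.pow_le_pow_right (by norm_num) hk)).trans
        (five_pow_mul_add_five_le r)
    have h2 : 1 ≤ 2 ^ k := Nat.one_le_two_pow
    have : 5 ^ k * (14 * (10 + 5 * ((r + 1) * 2 ^ k))) < 5 ^ k * s := by
      calc 5 ^ k * (14 * (10 + 5 * ((r + 1) * 2 ^ k)))
          ≤ 5 ^ k * (2 ^ k * (70 * (r + 5))) := Nat.mul_le_mul_left _ (by nlinarith)
        _ = 2 ^ k * (70 * (5 ^ k * (r + 5))) := by ring
        _ ≤ 2 ^ k * (350 * 6 ^ r) := by gcongr 2 ^ k * ?_; linarith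
        _ < 2 ^ k * n := by gcongr
        _ ≤ 5 ^ k * s := hs
    exact (Nat.lt_of_mul_lt_mul_left this).le
  have h2r : 2 * r ≤ 2 ^ (r + 1) := by
    rw [pow_succ, mul_comm]; exact Nat.mul_le_mul_right 2 Nat.lt_two_pow_self.le
  -- the fifth power clears the exponent `3s/5`; `243 < 256` leaves room for a factor `2 ^ (s/14)`
  have hfifth : (4 * 3 ^ s * (2 * r) ^ 2 ^ k) ^ 5 ≤ (2 ^ s * 2 ^ (s - 2 * s / 5)) ^ 5 :=
    calc (4 * 3 ^ s * (2 * r) ^ 2 ^ k) ^ 5 ≤ (4 * 3 ^ s * (2 ^ (r + 1)) ^ 2 ^ k) ^ 5 := by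
          gcongr
      _ = 3 ^ (5 * s) * 2 ^ (10 + 5 * ((r + 1) * 2 ^ k)) := by ring
      _ ≤ 256 ^ s := by rw [pow_mul]; exact pow_243_mul_two_pow_le hm
      _ = 2 ^ (8 * s) := by rw [pow_mul]; norm_num
      _ ≤ 2 ^ (5 * (s + (s - 2 * s / 5))) := Nat.pow_le_pow_right two_pos (by omega)
      _ = (2 ^ s * 2 ^ (s - 2 * s / 5)) ^ 5 := by ring
  exact (Nat.pow_le_pow_iff_left (by norm_num)).mp hfifth

lemma exists_ssubset_sq_card_le {r k : ℕ} (hr : 0 < r) (hk : k ≤ r) (hn : 350 * 6 ^ r < n)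
    {S : Finset (Fin n)} {A : Finset (Fin n → Bool)} (hS : 2 ^ k * n ≤ 5 ^ k * #S)
    (hA0 : 0 < #A) (hA : 2 * r * 2 ^ n ≤ #A * (2 * r) ^ 2 ^ k) :
    ∃ T ⊂ S, 2 * #S < 5 * #T ∧ #A ^ 2 ≤ 2 ^ (n + 1) * #{x ∈ A | flipOn T x ∈ A} := by
  set s := #S
  set t := 2 * s / 5
  have hpow : 2 ^ (n - s) * 2 ^ s = 2 ^ n := by
    rw [← pow_add, Nat.sub_add_cancel (by simpa using card_le_univ S)]
  set bad := {T ∈ S.powerset | ¬(T ≠ S ∧ 2 * s < 5 * #T)}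
  have hbad_sub : bad ⊆ insert S {T ∈ S.powerset | #T ≤ t} := by
    intro T hT
    simp only [bad, mem_filter, not_and_or, not_not, not_lt] at hT
    rcases hT with ⟨hTS, rfl | hle⟩
    · exact mem_insert_self _ _
    · exact mem_insert_of_mem (mem_filter.mpr ⟨hTS, by omega⟩)
  have hcard_bad : #bad * 2 ^ (s - t) ≤ 2 * 3 ^ s :=
    calc #bad * 2 ^ (s - t) ≤ (#{T ∈ S.powerset | #T ≤ t} + 1) * 2 ^ (s - t) :=
          Nat.mul_le_mul_right _ ((card_le_card hbad_sub).trans (card_insert_le _ _))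
      _ = #{T ∈ S.powerset | #T ≤ t} * 2 ^ (s - t) + 2 ^ (s - t) := by ring
      _ ≤ 3 ^ s + 3 ^ s := add_le_add (card_filter_card_le_mul_pow_le S t)
          ((Nat.pow_le_pow_right two_pos (Nat.sub_le _ _)).trans
            (Nat.pow_le_pow_left (by norm_num) s))
      _ = 2 * 3 ^ s := by ring
  have hbad : 2 * 2 ^ (n - s) * #bad ≤ #A := by
    refine Nat.le_of_mul_le_mul_right (c := (2 * r) ^ 2 ^ k * (2 ^ s * 2 ^ (s - t))) ?_
      (by positivity)
    calc 2 * 2 ^ (n - s) * #bad * ((2 * r) ^ 2 ^ k * (2 ^ s * 2 ^ (s - t)))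
        = 2 ^ (n - s) * 2 ^ s * (2 * (#bad * 2 ^ (s - t)) * (2 * r) ^ 2 ^ k) := by ring
      _ ≤ 2 ^ n * (2 * (2 * 3 ^ s) * (2 * r) ^ 2 ^ k) := by rw [hpow]; gcongr
      _ = 2 ^ n * (4 * 3 ^ s * (2 * r) ^ 2 ^ k) := by ring
      _ ≤ 2 ^ n * (2 ^ s * 2 ^ (s - t)) :=
          Nat.mul_le_mul_left _ (four_mul_three_pow_mul_le hk hn hS)
      _ ≤ 2 * r * 2 ^ n * (2 ^ s * 2 ^ (s - t)) :=
          Nat.mul_le_mul_right _ (Nat.le_mul_of_pos_left _ (by omega))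
      _ ≤ #A * (2 * r) ^ 2 ^ k * (2 ^ s * 2 ^ (s - t)) := by gcongr
      _ = #A * ((2 * r) ^ 2 ^ k * (2 ^ s * 2 ^ (s - t))) := by ring
  obtain ⟨T, hT, ⟨hTS, hTcard⟩, hsq⟩ := exists_mem_filter_sq_le_mul_card
    (p := fun T => T ≠ S ∧ 2 * s < 5 * #T) hA0 (fun T _ => card_filter_le _ _)
    (sq_card_le_sum_card_flipOn_mem A S) hbad
  refine ⟨T, ssubset_of_subset_of_ne (mem_powerset.mp hT) hTS, hTcard, hsq.trans_eq ?_⟩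
  rw [card_powerset, mul_assoc 2, hpow, pow_succ']

variable {κ : Type*}

def HasMonoSelfCrossingPath (χ : Sym2 (Fin n → Bool) → κ) : Prop :=
  ∃ x y z w : Fin n → Bool, x ≠ y ∧ y ≠ z ∧ z ≠ w ∧ x ≠ z ∧ y ≠ w ∧
    MainDiagonalsSameSubcube n x y z w ∧ χ s(x, y) = χ s(y, z) ∧ χ s(y, z) = χ s(z, w)

def AvoidsColors (χ : Sym2 (Fin n → Bool) → κ) (S : Finset (Fin n))
    (A : Finset (Fin n → Bool)) (C : Finset κ) : Prop :=
  ∀ x ∈ A, ∀ z ∈ A, x ≠ z → diffSet x z ⊂ S → χ s(x, z) ∉ C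

lemma ne_flipOn {T : Finset (Fin n)} (hT : T.Nonempty) (x : Fin n → Bool) : x ≠ flipOn T x :=
  diffSet_nonempty_iff.mp (by rwa [diffSet_flipOn])

namespace AvoidsColors

variable {χ : Sym2 (Fin n → Bool) → κ} {S T : Finset (Fin n)} {A : Finset (Fin n → Bool)}
  {C : Finset κ}

lemma color_flipOn_notMem (h : AvoidsColors χ S A C) (hTS : T ⊂ S) (hT : T.Nonempty)
    {x : Fin n → Bool} (hx : x ∈ A) (hfx : flipOn T x ∈ A) : χ s(x, flipOn T x) ∉ C :=
  h x hx _ hfx (ne_flipOn hT x) (by rwa [diffSet_flipOn])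

lemma insert [DecidableEq κ] (hχ : ¬ HasMonoSelfCrossingPath χ) (h : AvoidsColors χ S A C)
    (hTS : T ⊂ S) {A' : Finset (Fin n → Bool)} {a : κ}
    (hA' : ∀ x ∈ A', x ∈ A ∧ χ s(x, flipOn T x) = a) :
    AvoidsColors χ T A' (insert a C) := by
  intro x hx z hz hxz hD hcol
  obtain ⟨hxA, hxa⟩ := hA' x hx
  obtain ⟨hzA, hza⟩ := hA' z hz
  rcases mem_insert.mp hcol with ha | hC
  · have hT : T.Nonempty := (diffSet_nonempty_iff.mpr hxz).mono hD.subset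
    refine hχ ⟨flipOn T x, x, z, flipOn T z, (ne_flipOn hT x).symm, hxz, ne_flipOn hT z,
      ?_, ?_, mainDiagonalsSameSubcube_flipOn hD.subset, ?_, ?_⟩
    · rintro rfl; exact hD.ne (diffSet_flipOn T x)
    · rintro rfl; exact hD.ne (by rw [diffSet_comm, diffSet_flipOn])
    · rw [Sym2.eq_swap, hxa, ha]
    · rw [ha, hza]
  · exact h x hxA z hzA hxz (hD.trans hTS) hC

end AvoidsColors

variable [Fintype κ]

structure IsStage (χ : Sym2 (Fin n → Bool) → κ) (k : ℕ) (S : Finset (Fin n))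
    (A : Finset (Fin n → Bool)) (C : Finset κ) : Prop where
  card_colors : #C = k
  card_support : 2 ^ k * n ≤ 5 ^ k * #S
  -- `#A ≥ 2 ^ n / (2r) ^ (2 ^ k - 1)`, multiplied out
  card_points : 2 * Fintype.card κ * 2 ^ n ≤ #A * (2 * Fintype.card κ) ^ 2 ^ k
  avoids : AvoidsColors χ S A C

lemma isStage_zero (χ : Sym2 (Fin n → Bool) → κ) : IsStage χ 0 univ univ ∅ where
  card_colors := card_empty
  card_support := by simp
  card_points := by simp [mul_comm]
  avoids := fun _ _ _ _ _ _ => notMem_empty _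

namespace IsStage

variable {χ : Sym2 (Fin n → Bool) → κ} {k : ℕ} {S : Finset (Fin n)}
  {A : Finset (Fin n → Bool)} {C : Finset κ}

lemma succ [DecidableEq κ] (hχ : ¬ HasMonoSelfCrossingPath χ)
    (hn : 350 * 6 ^ Fintype.card κ < n) (hk : k ≤ Fintype.card κ) (h : IsStage χ k S A C) :
    ∃ T A' C', IsStage χ (k + 1) T A' C' := by
  set r := Fintype.card κ
  have hr : 0 < r := Fintype.card_pos_iff.mpr ⟨χ s(0, 0)⟩
  have hA0 : 0 < #A := by
    have := h.card_points
    refine Nat.pos_of_ne_zero fun h0 => ?_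
    rw [h0, zero_mul] at this
    linarith [(by positivity : 0 < 2 * r * 2 ^ n)]
  obtain ⟨T, hTS, hTcard, hsq⟩ :=
    exists_ssubset_sq_card_le hr hk hn h.card_support hA0 h.card_points
  set B := {x ∈ A | flipOn T x ∈ A}
  have hB : B.Nonempty := by
    rw [← card_pos]; by_contra! hB0
    rw [Nat.le_zero.mp hB0, mul_zero] at hsq
    linarith [(by positivity : 0 < #A ^ 2)]
  obtain ⟨a, ha, hBa⟩ :=
    exists_mem_image_card_le_mul_card_fiber hB fun x => χ s(x, flipOn T x)
  have hT : T.Nonempty := card_pos.mp (by omega)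
  have haC : a ∉ C := by
    obtain ⟨x, hx, rfl⟩ := mem_image.mp ha
    exact h.avoids.color_flipOn_notMem hTS hT (mem_filter.mp hx).1 (mem_filter.mp hx).2
  set A' := {x ∈ B | χ s(x, flipOn T x) = a}
  refine ⟨T, A', insert a C, card_insert_of_notMem haC ▸ h.card_colors ▸ rfl, ?_, ?_,
    h.avoids.insert hχ hTS fun x hx => ⟨(mem_filter.mp (mem_filter.mp hx).1).1,
      (mem_filter.mp hx).2⟩⟩
  · calc 2 ^ (k + 1) * n = 2 * (2 ^ k * n) := by ring
      _ ≤ 2 * (5 ^ k * #S) := Nat.mul_le_mul_left _ h.card_support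
      _ = 5 ^ k * (2 * #S) := by ring
      _ ≤ 5 ^ k * (5 * #T) := Nat.mul_le_mul_left _ hTcard.le
      _ = 5 ^ (k + 1) * #T := by ring
  · set D := (2 * r) ^ 2 ^ k
    have hD : (2 * r) ^ 2 ^ (k + 1) = D ^ 2 := by rw [pow_succ, pow_mul]
    rw [hD]
    refine Nat.le_of_mul_le_mul_left ?_ (by positivity : 0 < 2 * r * 2 ^ n)
    calc 2 * r * 2 ^ n * (2 * r * 2 ^ n) ≤ (#A * D) ^ 2 := by
          rw [← sq]; exact Nat.pow_le_pow_left h.card_points 2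
      _ = #A ^ 2 * D ^ 2 := mul_pow _ _ _
      _ ≤ 2 ^ (n + 1) * (r * #A') * D ^ 2 := by gcongr; exact hsq.trans (by gcongr)
      _ = 2 * r * 2 ^ n * (#A' * D ^ 2) := by ring

end IsStage

theorem hasMonoSelfCrossingPath_of_lt [DecidableEq κ] (χ : Sym2 (Fin n → Bool) → κ)
    (hn : 350 * 6 ^ Fintype.card κ < n) : HasMonoSelfCrossingPath χ := by
  by_contra hχ
  have hstage : ∀ k ≤ Fintype.card κ + 1, ∃ S A C, IsStage χ k S A C := by
    intro k hk
    induction k with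
    | zero => exact ⟨univ, univ, ∅, isStage_zero χ⟩
    | succ k ih =>
      obtain ⟨S, A, C, h⟩ := ih (by omega)
      exact h.succ hχ hn (by omega)
  obtain ⟨S, A, C, h⟩ := hstage _ le_rfl
  have := h.card_colors ▸ card_le_univ C
  omega

end Hypercube

/-- In any `r`-coloring of the diagonals of the `n`-cube (unordered pairs of
distinct vertices of `{0,1}ⁿ`), provided `n > c * 6 ^ r` (for an absolute constant
`c`), there is a monochromatic self-crossing path: three diagonals `{x,y}`,
`{y,z}`, `{z,w}` of the same color with `{x,y}` and `{z,w}` main diagonals of the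
same affine subcube. -/
theorem monochromatic_self_crossing_path :
    ∃ c : ℕ, 0 < c ∧ ∀ r : ℕ, 0 < r → ∀ n : ℕ, c * 6 ^ r < n →
      ∀ χ : Sym2 (Fin n → Bool) → Fin r,
        ∃ x y z w : Fin n → Bool,
          x ≠ y ∧ y ≠ z ∧ z ≠ w ∧ x ≠ z ∧ y ≠ w ∧
          MainDiagonalsSameSubcube n x y z w ∧
          χ s(x, y) = χ s(y, z) ∧ χ s(y, z) = χ s(z, w) := by
  refine ⟨350, by norm_num, fun r _ n hn χ => ?_⟩
  exact Hypercube.hasMonoSelfCrossingPath_of_lt χ (by simpa using hn)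
end

section
/- For every positive integer r there exist δ = δ(r) > 0 and n₀ = n₀(r) (and one may take δ = 1/2^{r+1}) with the following property: if A and B are sets of real numbers with |A| = |B| = n ≥ n₀ and |A + B| ≤ n^{1+δ}, then any r-coloring of A × B contains a monochromatic corner, i.e., three points (a,b), (a+d,b), (a,b+d) of the same color with a, a+d ∈ A, b, b+d ∈ B and d a positive real number. -/
/-!
Induct on the number `k` of colours, keeping `|A + B| ≤ K` fixed. Since `A × B` is covered by
at most `K k` classes (antidiagonal `x + y = σ`, colour `c`), one class has at least
`|A| |B| / (K k)` points. Let `L` be the lower half of their first coordinates and `U` the upper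
half. If some `(a, σ - u)` with `a ∈ L`, `u ∈ U` has colour `c`, it is the corner point of a
monochromatic corner with `d = u - a`, its other two vertices `(u, σ - u)` and `(a, σ - a)` lying
on the antidiagonal. Otherwise `L × (σ - U)` avoids `c`, and we recurse with `k - 1` colours.

The sizes shrink from `K ^ θ (k + 1)` to `K ^ θ k`: as `2 θ (k + 1) = 1 + θ k + 4⁻ᵏ⁻¹`, the class
has at least `K ^ θ k * K ^ 4⁻ᵏ⁻¹ / (k + 1) ≥ 3 K ^ θ k` points once `K ^ 4⁻ᵏ⁻¹ ≥ 3 (k + 1)`,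
which `n ≥ (3 r) ^ 4 ^ r` guarantees. Finally `(1 + 2⁻ʳ⁻¹) θ r ≤ 1`, so `K = n ^ (1 + δ)` and
`|A| = |B| = n` start the induction.
-/

open Pointwise Finset

theorem Finset.exists_subsets_lt_of_two_mul_le_card {α : Type*} [LinearOrder α] (s : Finset α)
    (h : ℕ) (hs : 2 * h ≤ #s) :
    ∃ L ⊆ s, ∃ U ⊆ s, #L = h ∧ #U = h ∧ ∀ x ∈ L, ∀ y ∈ U, x < y := by
  induction h generalizing s with
  | zero => exact ⟨∅, empty_subset _, ∅, empty_subset _, rfl, rfl, by simp⟩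
  | succ h ih =>
    have hne : s.Nonempty := card_pos.1 (by omega)
    have hlt : s.min' hne < s.max' hne := min'_lt_max'_of_card s (by omega)
    set t := (s.erase (s.min' hne)).erase (s.max' hne)
    have ht : #t = #s - 2 := by
      rw [card_erase_of_mem (mem_erase.2 ⟨hlt.ne', max'_mem _ _⟩),
        card_erase_of_mem (min'_mem _ _)]
      omega
    obtain ⟨L, hL, U, hU, hLc, hUc, hLU⟩ := ih t (by omega)
    have hts : t ⊆ s := (erase_subset _ _).trans (erase_subset _ _)
    have min_lt {y} (hy : y ∈ t) : s.min' hne < y :=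
      lt_of_le_of_ne (min'_le _ _ (hts hy)) (fun h ↦ by simp [t, ← h] at hy)
    have lt_max {x} (hx : x ∈ t) : x < s.max' hne :=
      lt_of_le_of_ne (le_max' _ _ (hts hx)) (fun h ↦ by simp [t, h] at hx)
    refine ⟨insert (s.min' hne) L, insert_subset (min'_mem _ _) (hL.trans hts),
      insert (s.max' hne) U, insert_subset (max'_mem _ _) (hU.trans hts), ?_, ?_, ?_⟩
    · rw [card_insert_of_notMem (fun h ↦ (min_lt (hL h)).false), hLc]
    · rw [card_insert_of_notMem (fun h ↦ (lt_max (hU h)).false), hUc]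
    · simp only [mem_insert, forall_eq_or_imp]
      exact ⟨⟨hlt, fun y hy ↦ min_lt (hU hy)⟩,
        fun x hx ↦ ⟨lt_max (hL hx), hLU x hx⟩⟩

variable {ι : Type*}

def HasMonoCorner (χ : ℝ × ℝ → ι) (A B : Finset ℝ) : Prop :=
  ∃ a b d : ℝ, a ∈ A ∧ b ∈ B ∧ a + d ∈ A ∧ b + d ∈ B ∧ 0 < d ∧
    χ (a, b) = χ (a + d, b) ∧ χ (a, b) = χ (a, b + d)

theorem HasMonoCorner.mono {χ : ℝ × ℝ → ι} {A A' B B' : Finset ℝ} (hA : A ⊆ A') (hB : B ⊆ B')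
    (h : HasMonoCorner χ A B) : HasMonoCorner χ A' B' := by
  obtain ⟨a, b, d, ha, hb, had, hbd, hd, h₁, h₂⟩ := h
  exact ⟨a, b, d, hA ha, hB hb, hA had, hB hbd, hd, h₁, h₂⟩

variable [DecidableEq ι]

noncomputable def antidiagonalColorClass (χ : ℝ × ℝ → ι) (A B : Finset ℝ) (σ : ℝ) (c : ι) :
    Finset ℝ :=
  {x ∈ A | σ - x ∈ B ∧ χ (x, σ - x) = c}

variable {χ : ℝ × ℝ → ι} {A B : Finset ℝ} {σ : ℝ} {c : ι}

theorem hasMonoCorner_of_mem_antidiagonalColorClass {a u : ℝ}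
    (ha : a ∈ antidiagonalColorClass χ A B σ c) (hu : u ∈ antidiagonalColorClass χ A B σ c)
    (hau : a < u) (hc : χ (a, σ - u) = c) : HasMonoCorner χ A B := by
  simp only [antidiagonalColorClass, mem_filter] at ha hu
  refine ⟨a, σ - u, u - a, ha.1, hu.2.1, ?_, ?_, sub_pos.2 hau, ?_, ?_⟩ <;>
    simp only [add_sub_cancel, sub_add_sub_cancel] <;> grind

theorem exists_card_antidiagonalColorClass_ge (C : Finset ι)
    (hχ : ∀ a ∈ A, ∀ b ∈ B, χ (a, b) ∈ C) (hA : A.Nonempty) (hB : B.Nonempty) :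
    ∃ σ, ∃ c ∈ C, (#A * #B : ℝ) ≤ #(A + B) * #C * #(antidiagonalColorClass χ A B σ c) := by
  have hmaps : ∀ p ∈ A ×ˢ B, (p.1 + p.2, χ p) ∈ (A + B) ×ˢ C := by
    simp only [mem_product]
    exact fun p hp ↦ ⟨add_mem_add hp.1 hp.2, hχ _ hp.1 _ hp.2⟩
  have hne : ((A + B) ×ˢ C).Nonempty :=
    (hA.add hB).product ⟨_, hχ _ hA.choose_spec _ hB.choose_spec⟩
  have hpos : (0 : ℝ) < #((A + B) ×ˢ C) := by exact_mod_cast hne.card_pos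
  obtain ⟨⟨σ, c⟩, hσc, hfiber⟩ := exists_le_card_fiber_of_nsmul_le_card_of_maps_to hmaps hne
    (b := (#(A ×ˢ B) : ℝ) / #((A + B) ×ˢ C)) (by rw [nsmul_eq_mul, mul_div_cancel₀ _ hpos.ne'])
  refine ⟨σ, c, (mem_product.1 hσc).2, ?_⟩
  have hinj :
      #{p ∈ A ×ˢ B | (p.1 + p.2, χ p) = (σ, c)} ≤ #(antidiagonalColorClass χ A B σ c) := by
    refine card_le_card_of_injOn Prod.fst (fun p hp ↦ ?_) (fun p hp q hq hpq ↦ ?_)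
    · simp only [coe_filter, mem_product, Prod.mk.injEq, Set.mem_ofPred_eq] at hp
      simp only [antidiagonalColorClass, coe_filter, Set.mem_ofPred_eq]
      obtain ⟨⟨ha, hb⟩, hs, hc⟩ := hp
      rw [← hs, add_sub_cancel_left, ← hc]
      exact ⟨ha, hb, rfl⟩
    · simp only [coe_filter, Prod.mk.injEq, Set.mem_ofPred_eq] at hp hq
      exact Prod.ext hpq (by linarith)
  rw [div_le_iff₀ hpos, card_product, card_product] at hfiber
  push_cast at hfiber
  calc (#A * #B : ℝ) ≤ _ := hfiber
    _ ≤ #(antidiagonalColorClass χ A B σ c) * (#(A + B) * #C) := by gcongr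
    _ = _ := by ring

theorem hasMonoCorner_or_exists_avoiding (h : ℕ)
    (hT : 2 * h ≤ #(antidiagonalColorClass χ A B σ c)) :
    HasMonoCorner χ A B ∨
      ∃ A' ⊆ A, ∃ B' ⊆ B, #A' = h ∧ #B' = h ∧ ∀ a ∈ A', ∀ b ∈ B', χ (a, b) ≠ c := by
  obtain ⟨L, hL, U, hU, hLc, hUc, hLU⟩ := exists_subsets_lt_of_two_mul_le_card _ h hT
  have hTA : antidiagonalColorClass χ A B σ c ⊆ A := filter_subset _ _
  by_cases hc : ∃ a ∈ L, ∃ u ∈ U, χ (a, σ - u) = c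
  · obtain ⟨a, ha, u, hu, hc⟩ := hc
    exact .inl (hasMonoCorner_of_mem_antidiagonalColorClass (hL ha) (hU hu) (hLU a ha u hu) hc)
  push Not at hc
  refine .inr ⟨L, hL.trans hTA, U.image (σ - ·), ?_, hLc, ?_, ?_⟩
  · simp only [image_subset_iff]
    exact fun u hu ↦ (mem_filter.1 (hU hu)).2.1
  · rwa [card_image_of_injective _ sub_right_injective]
  · simp only [mem_image, forall_exists_index, and_imp]
    rintro a ha _ u hu rfl
    exact hc a ha u hu

-- The exponent `θ k` of the header; `θ 0 = 0`.
noncomputable def cornerExponent (k : ℕ) : ℝ := 1 - (1 / 2) ^ (k + 1) - (1 / 4) ^ k / 2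

theorem cornerExponent_nonneg (k : ℕ) : 0 ≤ cornerExponent k := by
  have h₁ : (1 / 2 : ℝ) ^ k ≤ 1 := pow_le_one₀ (by norm_num) (by norm_num)
  have h₂ : (1 / 4 : ℝ) ^ k ≤ 1 := pow_le_one₀ (by norm_num) (by norm_num)
  rw [cornerExponent, pow_succ]
  linarith

theorem two_mul_cornerExponent_succ (k : ℕ) :
    2 * cornerExponent (k + 1) = 1 + cornerExponent k + (1 / 4) ^ (k + 1) := by
  simp only [cornerExponent, pow_succ]
  ring

theorem rpow_cornerExponent_succ_mul_self {K : ℝ} (hK : 0 < K) (k : ℕ) :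
    K ^ cornerExponent (k + 1) * K ^ cornerExponent (k + 1) =
      K * K ^ cornerExponent k * K ^ ((1 / 4 : ℝ) ^ (k + 1)) := by
  rw [← Real.rpow_add hK, ← two_mul, two_mul_cornerExponent_succ, Real.rpow_add hK,
    Real.rpow_add hK, Real.rpow_one]

theorem hasMonoCorner_of_card_add_le {K : ℝ} (hK : 1 ≤ K) (k : ℕ)
    (hk : 3 * k ≤ K ^ ((1 / 4 : ℝ) ^ k)) (C : Finset ι) (hC : #C ≤ k) (A B : Finset ℝ)
    (hχ : ∀ a ∈ A, ∀ b ∈ B, χ (a, b) ∈ C) (hAB : #(A + B) ≤ K)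
    (hA : K ^ cornerExponent k ≤ #A) (hB : K ^ cornerExponent k ≤ #B) :
    HasMonoCorner χ A B := by
  have one_le (k : ℕ) : 1 ≤ K ^ cornerExponent k := Real.one_le_rpow hK (cornerExponent_nonneg k)
  have nonempty {k : ℕ} {S : Finset ℝ} (hS : K ^ cornerExponent k ≤ #S) : S.Nonempty :=
    card_pos.1 <| Nat.one_le_cast.1 ((one_le k).trans hS)
  induction k generalizing C A B with
  | zero =>
    obtain ⟨a, ha⟩ := nonempty hA
    obtain ⟨b, hb⟩ := nonempty hB
    simpa [card_eq_zero.1 (Nat.le_zero.1 hC)] using hχ a ha b hb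
  | succ k ih =>
    set X := K ^ cornerExponent k
    obtain ⟨σ, c, hc, hcount⟩ :=
      exists_card_antidiagonalColorClass_ge C hχ (nonempty hA) (nonempty hB)
    set T := antidiagonalColorClass χ A B σ c
    have hT : 3 * X ≤ #T := by
      have hC' : (#C : ℝ) ≤ k + 1 := by exact_mod_cast hC
      have hk' : (3 * (k + 1) : ℝ) ≤ K ^ ((1 / 4 : ℝ) ^ (k + 1)) := by exact_mod_cast hk
      have : K * (k + 1) * (3 * X) ≤ K * (k + 1) * #T :=
        calc K * (k + 1) * (3 * X) = K * X * (3 * (k + 1)) := by ring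
          _ ≤ K * X * K ^ ((1 / 4 : ℝ) ^ (k + 1)) := by gcongr
          _ = K ^ cornerExponent (k + 1) * K ^ cornerExponent (k + 1) :=
            (rpow_cornerExponent_succ_mul_self (by positivity) k).symm
          _ ≤ #A * #B := by gcongr
          _ ≤ #(A + B) * #C * #T := hcount
          _ ≤ K * (k + 1) * #T := by gcongr
      exact le_of_mul_le_mul_left this (by positivity)
    have hX : X ≤ (#T / 2 : ℕ) := by
      have : (#T : ℝ) ≤ 2 * (#T / 2 : ℕ) + 1 := by
        exact_mod_cast (by omega : #T ≤ 2 * (#T / 2) + 1)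
      linarith [one_le k]
    obtain hcorner | ⟨A', hA', B', hB', hA'c, hB'c, havoid⟩ :=
      hasMonoCorner_or_exists_avoiding (#T / 2) (Nat.mul_div_le _ 2)
    · exact hcorner
    refine (ih ?_ (C.erase c) ?_ A' B' ?_ ?_ (hA'c ▸ hX) (hB'c ▸ hX)).mono hA' hB'
    · calc (3 * k : ℝ) ≤ 3 * (k + 1 : ℕ) := by gcongr; omega
        _ ≤ K ^ ((1 / 4 : ℝ) ^ (k + 1)) := hk
        _ ≤ K ^ ((1 / 4 : ℝ) ^ k) := Real.rpow_le_rpow_of_exponent_le hK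
          (pow_le_pow_of_le_one (by norm_num) (by norm_num) k.le_succ)
    · rw [card_erase_of_mem hc]; omega
    · exact fun a ha b hb ↦ mem_erase.2 ⟨havoid a ha b hb, hχ a (hA' ha) b (hB' hb)⟩
    · exact le_trans (by exact_mod_cast card_le_card (add_subset_add hA' hB')) hAB

theorem one_add_mul_cornerExponent_le_one (k : ℕ) :
    (1 + 1 / 2 ^ (k + 1)) * cornerExponent k ≤ 1 := by
  have h₁ : (0 : ℝ) ≤ (1 / 4) ^ k := by positivity
  have h₂ : (0 : ℝ) ≤ 1 / 2 ^ (k + 1) := by positivity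
  rw [cornerExponent, one_div_pow]
  nlinarith

theorem pow_four_pow_rpow_quarter_pow {x : ℝ} (hx : 0 ≤ x) (r : ℕ) :
    (x ^ 4 ^ r) ^ ((1 / 4 : ℝ) ^ r) = x := by
  simpa using Real.pow_rpow_inv_natCast hx (pow_ne_zero r (by norm_num : 4 ≠ 0))

/-- For every positive `r` there are `δ = δ(r) > 0` and `n₀ = n₀(r)` (one may take
`δ = 1 / 2 ^ (r + 1)`) such that: if `A, B` are sets of reals with
`|A| = |B| = n ≥ n₀` and `|A + B| ≤ n ^ (1 + δ)`, then any `r`-coloring of `A × B`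
contains a monochromatic corner `(a, b)`, `(a + d, b)`, `(a, b + d)` with `d > 0`. -/
theorem monochromatic_corner_of_small_sumset :
    ∀ r : ℕ, 0 < r → ∃ δ : ℝ, 0 < δ ∧ δ = 1 / 2 ^ (r + 1) ∧ ∃ n₀ : ℕ,
      ∀ (n : ℕ) (A B : Finset ℝ), A.card = n → B.card = n → n₀ ≤ n →
        ((A + B).card : ℝ) ≤ (n : ℝ) ^ ((1 : ℝ) + δ) →
        ∀ χ : ℝ × ℝ → Fin r, ∃ a b d : ℝ,
          a ∈ A ∧ b ∈ B ∧ a + d ∈ A ∧ b + d ∈ B ∧ 0 < d ∧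
          χ (a, b) = χ (a + d, b) ∧ χ (a, b) = χ (a, b + d) := by
  intro r hr
  refine ⟨1 / 2 ^ (r + 1), by positivity, rfl, (3 * r) ^ 4 ^ r, ?_⟩
  intro n A B hA hB hn hsum χ
  have hn₀ : ((3 * r : ℕ) : ℝ) ^ 4 ^ r ≤ n := by exact_mod_cast hn
  have hn₁ : (1 : ℝ) ≤ n := le_trans (one_le_pow₀ (by norm_cast; omega)) hn₀
  set K := (n : ℝ) ^ ((1 : ℝ) + 1 / 2 ^ (r + 1))
  have hnK : (n : ℝ) ≤ K :=
    Real.self_le_rpow_of_one_le hn₁ (le_add_of_nonneg_right (by positivity))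
  have hk : 3 * r ≤ K ^ ((1 / 4 : ℝ) ^ r) := by
    calc (3 * r : ℝ) = (((3 * r : ℕ) : ℝ) ^ 4 ^ r) ^ ((1 / 4 : ℝ) ^ r) := by
          rw [pow_four_pow_rpow_quarter_pow (by positivity)]; norm_cast
      _ ≤ K ^ ((1 / 4 : ℝ) ^ r) := by gcongr; exact hn₀.trans hnK
  have hKn : K ^ cornerExponent r ≤ n := by
    calc K ^ cornerExponent r = (n : ℝ) ^ ((1 + 1 / 2 ^ (r + 1)) * cornerExponent r) := by
          rw [← Real.rpow_mul (by positivity)]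
      _ ≤ (n : ℝ) ^ (1 : ℝ) :=
        Real.rpow_le_rpow_of_exponent_le hn₁ (one_add_mul_cornerExponent_le_one r)
      _ = n := Real.rpow_one _
  exact hasMonoCorner_of_card_add_le (hn₁.trans hnK) r hk univ (by simp) A B (by simp) hsum
    (hA ▸ hKn) (hB ▸ hKn)
end

section
/- For every r and m there exist δ = δ(r,m) > 0 and n₀ = n₀(r,m) with the following property: if A and B are sets of real numbers with |A| = |B| = n ≥ n₀ and |A + B| ≤ n^{1+δ}, then for any r-coloring of A × B there exist real numbers a, b and nonzero real numbers a_1, …, a_m such that the Hilbert cube H_m(a; a_1,…,a_m) is contained in A, the Hilbert cube H_m(b; a_1,…,a_m) is contained in B, and all points of H_m(a; a_1,…,a_m) × H_m(b; a_1,…,a_m) receive the same color. -/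
/-!
Pick `s` with many representations `s = x + y`, `x ∈ A`, `y ∈ B`. Then
`D = {x ∈ A | s - x ∈ B}` has at least `n ^ (1 - δ)` elements, while by Ruzsa's triangle inequality
`|D - D| ≤ |A - A| ≤ n ^ (1 + 2δ)`. Passing repeatedly from `D` to `D ∩ (D - t)` for a popular
positive difference `t` squares the density `|D| / (2 |A - A|)` at each step, so `D` contains a
Hilbert cube `H_N(a₀; d)` with positive steps for `N` as large as we like once `δ` is small; and
`s - H_N(a₀; d) ⊆ B` is again a Hilbert cube with the same steps `d`.

A point of `(Bool × Bool) ^ N` selects a point in each of these two cubes; colour it by the colour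
of that pair. The multidimensional Hales–Jewett theorem yields a monochromatic combinatorial
subspace of dimension `m`, which is a pair of `m`-dimensional subcubes with common steps.
-/

open Finset Combinatorics Pointwise

section HilbertCube

variable {G ι : Type*} [Fintype ι]

def cubePoint [AddCommMonoid G] (a : G) (d : ι → G) (ε : ι → Bool) : G :=
  a + ∑ i, if ε i then d i else 0

def hilbertCube [AddCommMonoid G] (a : G) (d : ι → G) : Set G :=
  Set.range (cubePoint a d)

section AddCommMonoid

variable [AddCommMonoid G]

@[simp]
lemma cubePoint_false (a : G) (d : ι → G) : cubePoint a d (fun _ => false) = a := by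
  simp [cubePoint]

lemma cubePoint_mem_hilbertCube (a : G) (d : ι → G) (ε : ι → Bool) :
    cubePoint a d ε ∈ hilbertCube a d :=
  Set.mem_range_self ε

lemma cubePoint_cons {M : ℕ} (a t : G) (d : Fin M → G) (ε : Fin (M + 1) → Bool) :
    cubePoint a (Fin.cons t d) ε = cubePoint a d (Fin.tail ε) + if ε 0 then t else 0 := by
  simp only [cubePoint, Fin.sum_univ_succ, Fin.cons_zero, Fin.cons_succ, Fin.tail]
  abel

/-- The base point collects the steps of the fixed coordinates of `l` selected by `w`; the step
attached to a variable `e` is the sum of the `d i` over the coordinates `i` that follow `e`. -/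
lemma Combinatorics.Subspace.cubePoint_comp {η α : Type*} [Fintype η] [DecidableEq η]
    [DecidableEq α] (l : Subspace η α ι) (w : α → Bool) (a : G) (d : ι → G) (x : η → α) :
    cubePoint a d (w ∘ l x) =
      cubePoint (cubePoint a d fun i => (l.idxFun i).elim w fun _ => false)
        (fun e => ∑ i with l.idxFun i = .inr e, d i) (w ∘ x) := by
  have h : ∀ i, (if w (l x i) then d i else 0) =
      (if (l.idxFun i).elim w (fun _ => false) then d i else 0) +
        ∑ e, if l.idxFun i = .inr e then (if w (x e) then d i else 0) else 0 := by
    intro i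
    cases hi : l.idxFun i <;> simp [l.apply_def, hi]
    congr
  simp only [cubePoint, Function.comp_apply, h, sum_add_distrib, add_assoc]
  congr 2
  rw [sum_comm]
  refine sum_congr rfl fun e _ => ?_
  rw [← sum_filter]
  split_ifs <;> simp

end AddCommMonoid

section AddCommGroup

variable [AddCommGroup G]

lemma sub_cubePoint (c a : G) (d : ι → G) (ε : ι → Bool) :
    c - cubePoint a d ε = cubePoint (c - a - ∑ i, d i) d fun i => !ε i := by
  have h : ∀ i, (if ε i then d i else 0) + (if !ε i then d i else 0) = d i := by
    intro i; cases ε i <;> simp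
  rw [← sum_congr rfl fun i _ => h i, sum_add_distrib]
  simp only [cubePoint]
  abel

lemma hilbertCube_subset_of_sub_mem {a c : G} {d : ι → G} {B : Set G}
    (h : ∀ x ∈ hilbertCube a d, c - x ∈ B) : hilbertCube (c - a - ∑ i, d i) d ⊆ B := by
  rintro _ ⟨ε, rfl⟩
  simpa [sub_cubePoint] using h _ (cubePoint_mem_hilbertCube a d fun i => !ε i)

end AddCommGroup

end HilbertCube

theorem exists_mono_hilbertCube_prod (G κ : Type*) [AddCommMonoid G] [PartialOrder G]
    [IsOrderedCancelAddMonoid G] [Finite κ] (m : ℕ) :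
    ∃ N, ∀ (a b : G) (d : Fin N → G), (∀ i, 0 < d i) → ∀ χ : G × G → κ,
      ∃ (a' b' : G) (e : Fin m → G), (∀ k, 0 < e k) ∧ hilbertCube a' e ⊆ hilbertCube a d ∧
        hilbertCube b' e ⊆ hilbertCube b d ∧
        ∀ p ∈ hilbertCube a' e ×ˢ hilbertCube b' e, χ p = χ (a', b') := by
  obtain ⟨N, hN⟩ := Subspace.exists_mono_in_high_dimension_fin (Bool × Bool) κ (Fin m)
  refine ⟨N, fun a b d hd χ => ?_⟩
  obtain ⟨l, c, hc⟩ := hN fun p => χ (cubePoint a d (Prod.fst ∘ p), cubePoint b d (Prod.snd ∘ p))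
  set e : Fin m → G := fun k => ∑ i with l.idxFun i = .inr k, d i
  have he : ∀ k, 0 < e k := fun k =>
    sum_pos (fun i _ => hd i) (by obtain ⟨i, hi⟩ := l.proper k; exact ⟨i, by simp [hi]⟩)
  set a' := cubePoint a d fun i => (l.idxFun i).elim Prod.fst fun _ => false
  set b' := cubePoint b d fun i => (l.idxFun i).elim Prod.snd fun _ => false
  have hcolor : ∀ ε ε', χ (cubePoint a' e ε, cubePoint b' e ε') = c := fun ε ε' => by
    have h := hc fun k => (ε k, ε' k)
    dsimp only at h
    rwa [l.cubePoint_comp, l.cubePoint_comp] at h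
  refine ⟨a', b', e, he, ?_, ?_, ?_⟩
  · rintro _ ⟨ε, rfl⟩
    exact ⟨_, l.cubePoint_comp Prod.fst a d fun k => (ε k, false)⟩
  · rintro _ ⟨ε, rfl⟩
    exact ⟨_, l.cubePoint_comp Prod.snd b d fun k => (false, ε k)⟩
  · rintro ⟨_, _⟩ ⟨⟨ε, rfl⟩, ⟨ε', rfl⟩⟩
    rw [hcolor, ← hcolor (fun _ => false) (fun _ => false), cubePoint_false, cubePoint_false]

lemma Finset.exists_card_le_mul_card_fiber {α β : Type*} [DecidableEq β] {s : Finset α}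
    {t : Finset β} {f : α → β} (hf : ∀ a ∈ s, f a ∈ t) (ht : t.Nonempty) :
    ∃ y ∈ t, #s ≤ #t * #{a ∈ s | f a = y} := by
  obtain ⟨y, hy, hmax⟩ := t.exists_max_image (fun y => #{a ∈ s | f a = y}) ht
  refine ⟨y, hy, ?_⟩
  calc #s = ∑ z ∈ t, #{a ∈ s | f a = z} := card_eq_sum_card_fiberwise hf
    _ ≤ #t • #{a ∈ s | f a = y} := sum_le_card_nsmul _ _ _ hmax
    _ = _ := smul_eq_mul _ _

lemma Finset.exists_card_mul_card_le_card_add_mul {G : Type*} [AddCommGroup G] [DecidableEq G]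
    (A B : Finset G) : ∃ s : G, #A * #B ≤ #(A + B) * #{x ∈ A | s - x ∈ B} := by
  rcases (A + B).eq_empty_or_nonempty with hAB | hAB
  · exact ⟨0, by rcases add_eq_empty.1 hAB with rfl | rfl <;> simp⟩
  have hsum : ∀ p ∈ A ×ˢ B, p.1 + p.2 ∈ A + B := fun p hp =>
    add_mem_add (mem_product.1 hp).1 (mem_product.1 hp).2
  obtain ⟨s, -, hs⟩ := exists_card_le_mul_card_fiber hsum hAB
  refine ⟨s, ?_⟩
  rw [← card_product]
  refine hs.trans (Nat.mul_le_mul_left _ (card_le_card_of_injOn Prod.fst ?_ ?_))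
  · intro p hp
    simp only [coe_filter, mem_product, Set.mem_ofPred_eq] at hp
    simp only [coe_filter, Set.mem_ofPred_eq, ← hp.2, add_sub_cancel_left]
    exact ⟨hp.1.1, hp.1.2⟩
  · intro p hp q hq hpq
    simp only [coe_filter, Set.mem_ofPred_eq] at hp hq
    exact Prod.ext hpq (by rw [← add_right_inj p.1, hp.2, hpq, hq.2])

section LinearOrder

variable {G : Type*} [AddCommGroup G] [LinearOrder G] [IsOrderedAddMonoid G] [DecidableEq G]

/-- A pair of `D` with difference `y` is `(x + |y|, x)` or `(x, x + |y|)`, where `x` is its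
minimum. -/
lemma Finset.card_offDiag_filter_sub_eq_le (D : Finset G) (y : G) :
    #{p ∈ D.offDiag | p.1 - p.2 = y} ≤ #{x ∈ D | x + |y| ∈ D} := by
  refine card_le_card_of_injOn (fun p => min p.1 p.2) ?_ ?_
  · intro p hp
    simp only [coe_filter, mem_offDiag, Set.mem_ofPred_eq] at hp ⊢
    obtain ⟨⟨h1, h2, -⟩, rfl⟩ := hp
    rcases le_total p.1 p.2 with h | h
    · rw [min_eq_left h, abs_of_nonpos (sub_nonpos.2 h), neg_sub, add_sub_cancel]
      exact ⟨h1, h2⟩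
    · rw [min_eq_right h, abs_of_nonneg (sub_nonneg.2 h), add_sub_cancel]
      exact ⟨h2, h1⟩
  · intro p hp q hq hpq
    simp only [coe_filter, mem_offDiag, Set.mem_ofPred_eq] at hp hq hpq
    grind

lemma Finset.exists_card_offDiag_le_card_sub_mul (D : Finset G) (hD : D.Nontrivial) :
    ∃ t > 0, #D.offDiag ≤ #(D - D) * #{x ∈ D | x + t ∈ D} := by
  have hdiff : ∀ p ∈ D.offDiag, p.1 - p.2 ∈ (D - D).erase 0 := by
    intro p hp
    rw [mem_offDiag] at hp
    exact mem_erase.2 ⟨sub_ne_zero.2 hp.2.2, sub_mem_sub hp.1 hp.2.1⟩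
  obtain ⟨a, ha, b, hb, hab⟩ := hD
  obtain ⟨y, hy, hfib⟩ :=
    exists_card_le_mul_card_fiber hdiff ⟨_, hdiff (a, b) (mem_offDiag.2 ⟨ha, hb, hab⟩)⟩
  refine ⟨|y|, abs_pos.2 (ne_of_mem_erase hy), hfib.trans ?_⟩
  exact Nat.mul_le_mul (card_le_card (erase_subset _ _)) (D.card_offDiag_filter_sub_eq_le y)

/-- A step passes to `{x ∈ D | x + t ∈ D}` for a popular difference `t > 0`, which squares the
ratio `|D| / (2K)`; the hypothesis says that this ratio is at least `K ^ (-1 / 2 ^ M)`. -/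
theorem Finset.exists_hilbertCube_subset (M : ℕ) {K : ℕ} (hK : 0 < K) {D : Finset G}
    (hDK : #(D - D) ≤ K) (hD : (2 * K) ^ 2 ^ M ≤ K * #D ^ 2 ^ M) :
    ∃ (a : G) (d : Fin M → G), (∀ i, 0 < d i) ∧ hilbertCube a d ⊆ D := by
  induction M generalizing D with
  | zero =>
    rw [pow_zero, pow_one, pow_one] at hD
    obtain ⟨a, ha⟩ : D.Nonempty := card_pos.1 (by nlinarith)
    refine ⟨a, Fin.elim0, fun i => i.elim0, ?_⟩
    rintro _ ⟨ε, rfl⟩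
    simpa [cubePoint] using ha
  | succ M ih =>
    set E := 2 ^ M
    have hD2 : 1 < #D := by
      by_contra! h
      have : K * #D ^ 2 ^ (M + 1) ≤ K := by
        simpa using Nat.mul_le_mul_left K (pow_le_one₀ (Nat.zero_le _) h)
      have : 2 * K ≤ (2 * K) ^ 2 ^ (M + 1) := Nat.le_self_pow (by positivity) _
      omega
    obtain ⟨t, ht, hpop⟩ :=
      D.exists_card_offDiag_le_card_sub_mul (one_lt_card_iff_nontrivial.1 hD2)
    set D' := {x ∈ D | x + t ∈ D}
    have hsq : #D ^ 2 ≤ 2 * K * #D' := by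
      have : 2 * #D ≤ #D * #D := Nat.mul_le_mul_right _ hD2
      have : #D.offDiag ≤ K * #D' := hpop.trans (Nat.mul_le_mul_right _ hDK)
      rw [offDiag_card] at this
      rw [sq, mul_assoc]
      omega
    have hD' : (2 * K) ^ E ≤ K * #D' ^ E := by
      refine Nat.le_of_mul_le_mul_left ?_ (pow_pos (by omega : 0 < 2 * K) E)
      calc (2 * K) ^ E * (2 * K) ^ E = (2 * K) ^ 2 ^ (M + 1) := by
            rw [← pow_add, pow_succ, mul_two]
        _ ≤ K * (#D ^ 2) ^ E := by rw [← pow_mul, ← pow_succ']; exact hD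
        _ ≤ K * (2 * K * #D') ^ E := by gcongr
        _ = (2 * K) ^ E * (K * #D' ^ E) := by ring
    obtain ⟨a, d, hd, hcube⟩ := ih
      ((card_le_card (sub_subset_sub (filter_subset _ _) (filter_subset _ _))).trans hDK) hD'
    refine ⟨a, Fin.cons t d, Fin.cases ht hd, ?_⟩
    rintro _ ⟨ε, rfl⟩
    have hmem := mem_filter.1 (hcube (cubePoint_mem_hilbertCube a d (Fin.tail ε)))
    rw [cubePoint_cons]
    split_ifs
    exacts [hmem.2, by simpa using hmem.1]

end LinearOrder

/-- `S`, `K` and `d` stand for `|A + B|`, `|A - A|` and `|{x ∈ A | s - x ∈ B}|`; the exponent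
`δ = 1 / (6E)` makes
`2 ^ E * K ^ (E - 1) ≤ n ^ (1/2 + (1 + 2δ)(E - 1)) ≤ n ^ ((1 - δ) E) ≤ d ^ E`. -/
lemma pow_le_of_small_sumset {E : ℕ} (hE : E ≠ 0) {n S K d : ℝ} (hn : 4 ^ E ≤ n)
    (hS₀ : 0 ≤ S) (hS : S ≤ n ^ (1 + 1 / (6 * E : ℝ))) (hK₀ : 0 ≤ K) (hKn : K * n ≤ S ^ 2)
    (hnd : n ^ 2 ≤ S * d) : (2 * K) ^ E ≤ K * d ^ E := by
  set δ : ℝ := 1 / (6 * E)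
  have hδ : δ * E = 1 / 6 := by simp only [δ]; field_simp
  have hδ₀ : 0 < δ := by positivity
  have hn₁ : 1 ≤ n := le_trans (one_le_pow₀ (by norm_num)) hn
  have hn₀ : 0 < n := by linarith
  have hK : K ≤ n ^ (1 + 2 * δ) := by
    refine le_of_mul_le_mul_right ?_ hn₀
    calc K * n ≤ (n ^ (1 + δ)) ^ 2 := hKn.trans (pow_le_pow_left₀ hS₀ hS 2)
      _ = n ^ (1 + 2 * δ) * n := by
        rw [← Real.rpow_natCast, ← Real.rpow_mul hn₀.le, ← Real.rpow_add_one hn₀.ne']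
        ring_nf
  have hd : n ^ (1 - δ) ≤ d := by
    refine le_of_mul_le_mul_left ?_ (Real.rpow_pos_of_pos hn₀ (1 + δ))
    calc n ^ (1 + δ) * n ^ (1 - δ) = n ^ 2 := by
          rw [← Real.rpow_add hn₀, ← Real.rpow_natCast]; norm_num
      _ ≤ S * d := hnd
      _ ≤ n ^ (1 + δ) * d := by
        have : 0 ≤ d := by nlinarith
        gcongr
  have h2 : (2 : ℝ) ^ E ≤ n ^ (2⁻¹ : ℝ) := by
    rw [Real.le_rpow_inv_iff_of_pos (by positivity) hn₀.le two_pos, Real.rpow_two, ← pow_mul,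
      mul_comm, pow_mul]
    norm_num [hn]
  have hexp : 2⁻¹ + (1 + 2 * δ) * ((E : ℝ) - 1) ≤ (1 - δ) * E := by nlinarith
  calc (2 * K) ^ E = 2 ^ E * K ^ (E - 1) * K := by rw [mul_pow, mul_assoc, pow_sub_one_mul hE]
    _ ≤ n ^ (2⁻¹ : ℝ) * (n ^ (1 + 2 * δ)) ^ (E - 1) * K := by gcongr
    _ = n ^ (2⁻¹ + (1 + 2 * δ) * ((E : ℝ) - 1)) * K := by
      rw [← Real.rpow_natCast, ← Real.rpow_mul hn₀.le, ← Real.rpow_add hn₀,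
        Nat.cast_sub (Nat.one_le_iff_ne_zero.2 hE), Nat.cast_one]
    _ ≤ n ^ ((1 - δ) * E) * K := by gcongr
    _ ≤ K * d ^ E := by
      rw [Real.rpow_mul hn₀.le, Real.rpow_natCast, mul_comm]
      gcongr

/-- For every `r` and `m` there are `δ = δ(r, m) > 0` and `n₀ = n₀(r, m)` such
that: if `A, B` are sets of reals with `|A| = |B| = n ≥ n₀` and
`|A + B| ≤ n ^ (1 + δ)`, then for any `r`-coloring of `A × B` there are reals
`a, b` and nonzero reals `a₁, …, a_m` with the Hilbert cube
`H_m(a; a₁, …, a_m) ⊆ A`, the Hilbert cube `H_m(b; a₁, …, a_m) ⊆ B`, and all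
points of their Cartesian product of the same color. -/
theorem monochromatic_hilbert_cubes_of_small_sumset :
    ∀ r m : ℕ, 0 < r → 0 < m → ∃ δ : ℝ, 0 < δ ∧ ∃ n₀ : ℕ,
      ∀ (n : ℕ) (A B : Finset ℝ), A.card = n → B.card = n → n₀ ≤ n →
        ((A + B).card : ℝ) ≤ (n : ℝ) ^ ((1 : ℝ) + δ) →
        ∀ χ : ℝ × ℝ → Fin r,
          ∃ (a b : ℝ) (a' : Fin m → ℝ), (∀ i, a' i ≠ 0) ∧
            (∀ ε : Fin m → Bool, a + ∑ i, (if ε i then a' i else 0) ∈ A) ∧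
            (∀ ε : Fin m → Bool, b + ∑ i, (if ε i then a' i else 0) ∈ B) ∧
            (∀ ε ε' : Fin m → Bool,
              χ (a + ∑ i, (if ε i then a' i else 0),
                 b + ∑ i, (if ε' i then a' i else 0)) = χ (a, b)) := by
  intro r m _ _
  obtain ⟨N, hN⟩ := exists_mono_hilbertCube_prod ℝ (Fin r) m
  refine ⟨1 / (6 * (2 ^ N : ℕ)), by positivity, 4 ^ 2 ^ N, fun n A B hA hB hn hAB χ => ?_⟩
  obtain ⟨s, hs⟩ := A.exists_card_mul_card_le_card_add_mul B
  set D := {x ∈ A | s - x ∈ B}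
  have hK : 0 < #(A - A) := by
    have : 0 < #A := hA ▸ lt_of_lt_of_le (by positivity) hn
    exact card_pos.2 ((card_pos.1 this).sub (card_pos.1 this))
  have hDK : #(D - D) ≤ #(A - A) :=
    card_le_card (sub_subset_sub (filter_subset _ _) (filter_subset _ _))
  have hcond : (2 * #(A - A)) ^ 2 ^ N ≤ #(A - A) * #D ^ 2 ^ N := by
    have hruzsa := A.ruzsa_triangle_inequality_sub_add_add B A
    rw [hB] at hruzsa
    rw [hA, hB] at hs
    exact_mod_cast pow_le_of_small_sumset (E := 2 ^ N) (n := n) (S := #(A + B))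
      (K := #(A - A)) (d := #D) (by positivity) (by exact_mod_cast hn) (by positivity) hAB
      (by positivity) (by rw [sq]; exact_mod_cast hruzsa) (by rw [sq]; exact_mod_cast hs)
  obtain ⟨a₀, d, hd, hcube⟩ := D.exists_hilbertCube_subset N hK hDK hcond
  obtain ⟨a, b, a', ha', hA', hB', hmono⟩ := hN a₀ (s - a₀ - ∑ i, d i) d hd χ
  have hAcube : hilbertCube a₀ d ⊆ A := hcube.trans (coe_subset.2 (filter_subset _ _))
  have hBcube : hilbertCube (s - a₀ - ∑ i, d i) d ⊆ B :=
    hilbertCube_subset_of_sub_mem fun x hx => (mem_filter.1 (hcube hx)).2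
  exact ⟨a, b, a', fun i => (ha' i).ne', fun ε => hAcube (hA' ⟨ε, rfl⟩),
    fun ε => hBcube (hB' ⟨ε, rfl⟩), fun ε ε' => hmono _ ⟨⟨ε, rfl⟩, ⟨ε', rfl⟩⟩⟩
end

section
/- For every positive integer n, the sum of the binomial coefficients C(n,t) over all integers t with 0 ≤ t < n/3 is less than 1.9^n. -/
/-- For every positive `n`, the sum of the binomial coefficients `C(n, t)` over
all `t` with `0 ≤ t < n / 3` is less than `1.9 ^ n`. -/
theorem sum_binomial_lt_of_lt_third (n : ℕ) (hn : 0 < n) :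
    (∑ t ∈ (Finset.range (n + 1)).filter (fun t : ℕ => (t : ℝ) < (n : ℝ) / 3),
        (n.choose t : ℝ)) < 1.9 ^ n := by
  set c : ℝ := (2 : ℝ) ^ ((1 : ℝ) / 3) with hc
  have hc0 : 0 < c := Real.rpow_pos_of_pos (by norm_num) _
  have hc3 : c ^ (3 : ℕ) = 2 := by
    rw [hc, ← Real.rpow_natCast ((2:ℝ) ^ ((1:ℝ)/3)) 3, ← Real.rpow_mul (by norm_num)]
    norm_num
  have hclt : c < 19 / 15 := by
    have h2 : (2 : ℝ) < (19 / 15 : ℝ) ^ (3 : ℕ) := by norm_num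
    have := lt_of_pow_lt_pow_left₀ 3 (by norm_num : (0:ℝ) ≤ 19/15) (hc3 ▸ h2)
    exact this
  have hcn : c ^ n = (2 : ℝ) ^ ((n : ℝ) / 3) := by
    rw [hc, ← Real.rpow_natCast ((2:ℝ) ^ ((1:ℝ)/3)) n, ← Real.rpow_mul (by norm_num)]
    ring_nf
  -- bound each term
  have hterm : ∀ t ∈ (Finset.range (n + 1)).filter (fun t : ℕ => (t : ℝ) < (n : ℝ) / 3),
      (n.choose t : ℝ) ≤ c ^ n * ((n.choose t : ℝ) * (1/2) ^ t) := by
    intro t ht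
    simp only [Finset.mem_filter, Finset.mem_range] at ht
    have h2t : (2 : ℝ) ^ t ≤ c ^ n := by
      rw [hcn, ← Real.rpow_natCast 2 t]
      exact Real.rpow_le_rpow_left_iff (by norm_num) |>.mpr (le_of_lt ht.2)
    have hpos : (0 : ℝ) ≤ (n.choose t : ℝ) * (1/2) ^ t := by positivity
    calc (n.choose t : ℝ) = (2:ℝ)^t * ((n.choose t : ℝ) * (1/2) ^ t) := by
            rw [one_div, inv_pow]; field_simp
      _ ≤ c ^ n * ((n.choose t : ℝ) * (1/2) ^ t) := by
            apply mul_le_mul_of_nonneg_right h2t hpos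
  have hsum1 : (∑ t ∈ (Finset.range (n + 1)).filter (fun t : ℕ => (t : ℝ) < (n : ℝ) / 3),
        (n.choose t : ℝ)) ≤ c ^ n * ∑ t ∈ Finset.range (n + 1), (n.choose t : ℝ) * (1/2) ^ t := by
    calc _ ≤ ∑ t ∈ (Finset.range (n + 1)).filter (fun t : ℕ => (t : ℝ) < (n : ℝ) / 3),
            c ^ n * ((n.choose t : ℝ) * (1/2) ^ t) := Finset.sum_le_sum hterm
      _ = c ^ n * ∑ t ∈ (Finset.range (n + 1)).filter (fun t : ℕ => (t : ℝ) < (n : ℝ) / 3),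
            ((n.choose t : ℝ) * (1/2) ^ t) := by rw [Finset.mul_sum]
      _ ≤ c ^ n * ∑ t ∈ Finset.range (n + 1), (n.choose t : ℝ) * (1/2) ^ t := by
            apply mul_le_mul_of_nonneg_left _ (le_of_lt (pow_pos hc0 n))
            apply Finset.sum_le_sum_of_subset_of_nonneg (Finset.filter_subset _ _)
            intro i _ _; positivity
  have hbinom : ∑ t ∈ Finset.range (n + 1), (n.choose t : ℝ) * (1/2) ^ t = (3/2 : ℝ) ^ n := by
    have := add_pow (1/2 : ℝ) 1 n
    simp only [one_pow, mul_one] at this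
    rw [show (3/2 : ℝ) = 1/2 + 1 by norm_num, this]
    apply Finset.sum_congr rfl
    intro t _; ring
  have hfinal : c ^ n * (3/2 : ℝ) ^ n < 1.9 ^ n := by
    rw [← mul_pow]
    apply pow_lt_pow_left₀ _ (by positivity) hn.ne'
    calc c * (3/2 : ℝ) < (19/15) * (3/2) := by
            apply mul_lt_mul_of_pos_right hclt (by norm_num)
        _ ≤ 1.9 := by norm_num
  calc _ ≤ c ^ n * ∑ t ∈ Finset.range (n + 1), (n.choose t : ℝ) * (1/2) ^ t := hsum1
    _ = c ^ n * (3/2 : ℝ) ^ n := by rw [hbinom]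
    _ < 1.9 ^ n := hfinal
end
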